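/- arXiv:1803.05750 — 6 statements merged into one kernel-verified Lean document; each statement's English description precedes it below -/
import Mathlib

section
/- For all natural numbers k ≥ 1 and real numbers R > 0, x ≥ 0, the integral ∫_{-1}^{1} (1-s²)^{k-1} / (R² + x² + 2Rxs)^{(2k-1)/2} ds equals ((2k-2)/(2k-1)) · ((2k-4)/(2k-3)) ⋯ (4/3) · (1/R^{2k-1}), i.e. equals (√π · Γ(k)/Γ(k+1/2)) · R^{-(2k-1)}, provided x < R (so the integrand is well-defined). -/
/-!
Substitute `v = (R s + x) / √B`, `B = R² + x² + 2 R x s`: the cosine of the polar angle of the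
point `s` of the sphere of radius `R` as seen from a point at distance `x` from the centre. It maps
`[-1, 1]` onto itself, `1 - v² = R² (1 - s²) / B`, and the integrand becomes
`R^(-(2k-1)) (1 - v²)^(k-1) (1 + x v / √(R² - x² + x² v²)) dv`. The second summand is odd in `v`,
so the integral is `R^(-(2k-1)) ∫ (1 - v²)^(k-1) dv`, independently of `x`, and the recursion
`(2j+3) W_(j+1) = (2j+2) W_j` for `W_j = ∫ (1 - v²)^j dv` (integration by parts) evaluates it.
-/

open Real intervalIntegral

theorem integral_symm_eq_zero_of_odd {E : Type*} [NormedAddCommGroup E] [NormedSpace ℝ E]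
    {f : ℝ → E} (hf : ∀ x, f (-x) = -f x) (a : ℝ) : ∫ x in -a..a, f x = 0 := by
  have h := integral_comp_neg (a := -a) (b := a) f
  simp only [hf, integral_neg, neg_neg] at h
  have h2 : (2 : ℝ) • ∫ x in -a..a, f x = 0 := by
    rw [two_smul]; nth_rewrite 1 [← h]; exact neg_add_cancel _
  simpa using h2

theorem integral_one_sub_sq_pow_succ (j : ℕ) :
    (2 * j + 3 : ℝ) * ∫ s in (-1:ℝ)..1, (1 - s ^ 2) ^ (j + 1) =
      (2 * j + 2) * ∫ s in (-1:ℝ)..1, (1 - s ^ 2) ^ j := by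
  have hderiv : ∀ s ∈ Set.uIcc (-1:ℝ) 1, HasDerivAt (fun u : ℝ => u * (1 - u ^ 2) ^ (j + 1))
      ((2 * j + 3) * (1 - s ^ 2) ^ (j + 1) - (2 * j + 2) * (1 - s ^ 2) ^ j) s := by
    intro s _
    have hpow : HasDerivAt (fun u : ℝ => (1 - u ^ 2) ^ (j + 1))
        ((j + 1) * (1 - s ^ 2) ^ j * -(2 * s)) s := by
      simpa using ((hasDerivAt_pow 2 s).const_sub 1).fun_pow (j + 1)
    refine ((hasDerivAt_id s).mul hpow).congr_deriv ?_
    simp only [id, one_mul]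
    ring
  have hftc := integral_eq_sub_of_hasDerivAt hderiv (by apply Continuous.intervalIntegrable; fun_prop)
  rw [integral_sub, integral_const_mul, integral_const_mul] at hftc
  · norm_num at hftc
    linarith
  all_goals apply Continuous.intervalIntegrable; fun_prop

theorem integral_one_sub_sq_pow (j : ℕ) :
    ∫ s in (-1:ℝ)..1, (1 - s ^ 2) ^ j = √π * Gamma (j + 1) / Gamma (j + 1 + 1 / 2) := by
  induction j with
  | zero =>
    rw [Nat.cast_zero, zero_add, show (1 : ℝ) + 1 / 2 = 1 / 2 + 1 by norm_num,
      Gamma_add_one (by norm_num), Gamma_one_half_eq, Gamma_one]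
    have : 0 < √π := by positivity
    field_simp
    norm_num
  | succ j ih =>
    have hrec := integral_one_sub_sq_pow_succ j
    rw [ih] at hrec
    have hΓ : 0 < Gamma (j + 1 + 1 / 2) := Gamma_pos_of_pos (by positivity)
    push_cast
    rw [Gamma_add_one (s := (j : ℝ) + 1) (by positivity),
      show (j : ℝ) + 1 + 1 + 1 / 2 = (j + 1 + 1 / 2) + 1 by ring,
      Gamma_add_one (s := (j : ℝ) + 1 + 1 / 2) (by positivity)]
    generalize Gamma (j + 1 + 1 / 2) = G at hΓ hrec ⊢
    field_simp at hrec ⊢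
    linear_combination hrec

theorem integral_one_sub_sq_pow_mul_one_add_odd (j : ℕ) {h : ℝ → ℝ} (hh : Continuous h)
    (hodd : ∀ v, h (-v) = -h v) :
    ∫ v in (-1:ℝ)..1, (1 - v ^ 2) ^ j * (1 + h v) = ∫ v in (-1:ℝ)..1, (1 - v ^ 2) ^ j := by
  simp only [mul_one_add]
  rw [integral_add (by apply Continuous.intervalIntegrable; fun_prop)
    (by apply Continuous.intervalIntegrable; fun_prop), add_eq_left]
  exact integral_symm_eq_zero_of_odd (fun v => by rw [hodd]; ring) 1

noncomputable def shellCos (R x s : ℝ) : ℝ := (R * s + x) / √(R ^ 2 + x ^ 2 + 2 * R * x * s)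

section Shell

variable {R x s : ℝ}

lemma add_mul_pos_of_abs_lt (hxR : |x| < R) (hs : s ∈ Set.uIcc (-1 : ℝ) 1) : 0 < R + x * s := by
  rw [Set.uIcc_of_le (by norm_num)] at hs
  have : |x * s| ≤ |x| := by
    rw [abs_mul]; exact mul_le_of_le_one_right (abs_nonneg x) (abs_le.mpr hs)
  linarith [neg_abs_le (x * s)]

lemma sq_add_sq_add_two_mul_mul_pos (hxR : |x| < R) (hs : s ∈ Set.uIcc (-1 : ℝ) 1) :
    0 < R ^ 2 + x ^ 2 + 2 * R * x * s := by
  have h1 := add_mul_pos_of_abs_lt hxR hs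
  rw [Set.uIcc_of_le (by norm_num)] at hs
  have h2 : 0 ≤ 1 - s ^ 2 := by nlinarith [hs.1, hs.2]
  nlinarith [mul_nonneg (sq_nonneg x) h2]

lemma hasDerivAt_shellCos (hB : 0 < R ^ 2 + x ^ 2 + 2 * R * x * s) :
    HasDerivAt (shellCos R x)
      (R ^ 2 * (R + x * s) / √(R ^ 2 + x ^ 2 + 2 * R * x * s) ^ 3) s := by
  have hlin : HasDerivAt (fun u => R ^ 2 + x ^ 2 + 2 * R * x * u) (2 * R * x) s := by
    simpa using ((hasDerivAt_id s).const_mul (2 * R * x)).const_add (R ^ 2 + x ^ 2)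
  have hnum : HasDerivAt (fun u => R * u + x) R s := by
    simpa using ((hasDerivAt_id s).const_mul R).add_const x
  refine (hnum.div (hlin.sqrt hB.ne') (Real.sqrt_pos.mpr hB).ne').congr_deriv ?_
  have hsq := Real.sq_sqrt hB.le
  have hr := Real.sqrt_pos.mpr hB
  set r := √(R ^ 2 + x ^ 2 + 2 * R * x * s)
  field_simp
  linear_combination R * hsq

lemma shellCos_one (hxR : |x| < R) : shellCos R x 1 = 1 := by
  have : 0 < R + x := by linarith [neg_abs_le x]
  rw [shellCos, show R ^ 2 + x ^ 2 + 2 * R * x * 1 = (R + x) ^ 2 by ring,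
    Real.sqrt_sq this.le, mul_one, div_self this.ne']

lemma shellCos_neg_one (hxR : |x| < R) : shellCos R x (-1) = -1 := by
  have : 0 < R - x := by linarith [le_abs_self x]
  rw [shellCos, show R ^ 2 + x ^ 2 + 2 * R * x * (-1) = (R - x) ^ 2 by ring,
    Real.sqrt_sq this.le, show R * -1 + x = -(R - x) by ring, neg_div, div_self this.ne']

lemma one_sub_shellCos_sq (hB : 0 < R ^ 2 + x ^ 2 + 2 * R * x * s) :
    1 - shellCos R x s ^ 2 = R ^ 2 * (1 - s ^ 2) / (R ^ 2 + x ^ 2 + 2 * R * x * s) := by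
  rw [shellCos, div_pow, Real.sq_sqrt hB.le, eq_div_iff hB.ne', sub_mul, div_mul_cancel₀ _ hB.ne']
  ring

lemma sqrt_sub_add_mul_shellCos_sq (hxR : |x| < R) (hs : s ∈ Set.uIcc (-1 : ℝ) 1) :
    √(R ^ 2 - x ^ 2 + x ^ 2 * shellCos R x s ^ 2) =
      R * (R + x * s) / √(R ^ 2 + x ^ 2 + 2 * R * x * s) := by
  have hB := sq_add_sq_add_two_mul_mul_pos hxR hs
  have hR : 0 < R := lt_of_le_of_lt (abs_nonneg x) hxR
  rw [Real.sqrt_eq_iff_mul_self_eq_of_pos (by have := add_mul_pos_of_abs_lt hxR hs; positivity),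
    shellCos, div_pow, div_mul_div_comm, ← sq, ← sq, Real.sq_sqrt hB.le]
  set B := R ^ 2 + x ^ 2 + 2 * R * x * s with hB_def
  field_simp
  rw [hB_def]
  ring

lemma shellCos_substitution_integrand (j : ℕ) (hxR : |x| < R) (hs : s ∈ Set.uIcc (-1 : ℝ) 1) :
    (1 - shellCos R x s ^ 2) ^ j *
        (1 + x * shellCos R x s / √(R ^ 2 - x ^ 2 + x ^ 2 * shellCos R x s ^ 2)) *
        (R ^ 2 * (R + x * s) / √(R ^ 2 + x ^ 2 + 2 * R * x * s) ^ 3) =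
      R ^ (2 * j + 1) *
        ((1 - s ^ 2) ^ j / (R ^ 2 + x ^ 2 + 2 * R * x * s) ^ ((2 * j + 1) / 2 : ℝ)) := by
  have hB := sq_add_sq_add_two_mul_mul_pos hxR hs
  have hRxs := add_mul_pos_of_abs_lt hxR hs
  have hR : 0 < R := lt_of_le_of_lt (abs_nonneg x) hxR
  rw [one_sub_shellCos_sq hB, sqrt_sub_add_mul_shellCos_sq hxR hs, rpow_div_two_eq_sqrt _ hB.le,
    show (2 * j + 1 : ℝ) = (2 * j + 1 : ℕ) by push_cast; ring, Real.rpow_natCast, shellCos]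
  have hsq := Real.sq_sqrt hB.le
  have hr := Real.sqrt_pos.mpr hB
  set r := √(R ^ 2 + x ^ 2 + 2 * R * x * s)
  have hfactor : 1 + x * ((R * s + x) / r) / (R * (R + x * s) / r) = r ^ 2 / (R * (R + x * s)) := by
    field_simp
    linear_combination -hsq
  rw [hfactor, ← hsq, div_pow, mul_pow]
  generalize R + x * s = c at hRxs ⊢
  field_simp
  ring

theorem integral_one_sub_sq_pow_div_rpow (j : ℕ) (hxR : |x| < R) :
    ∫ s in (-1:ℝ)..1, (1 - s ^ 2) ^ j / (R ^ 2 + x ^ 2 + 2 * R * x * s) ^ ((2 * j + 1) / 2 : ℝ) =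
      (∫ s in (-1:ℝ)..1, (1 - s ^ 2) ^ j) / R ^ (2 * j + 1) := by
  have hR : 0 < R := lt_of_le_of_lt (abs_nonneg x) hxR
  have hdisc : ∀ v, √(R ^ 2 - x ^ 2 + x ^ 2 * v ^ 2) ≠ 0 := by
    have : x ^ 2 < R ^ 2 := sq_lt_sq' (by linarith [neg_abs_le x]) (by linarith [le_abs_self x])
    exact fun v => (Real.sqrt_pos.mpr (by positivity)).ne'
  have hcont : Continuous fun v => x * v / √(R ^ 2 - x ^ 2 + x ^ 2 * v ^ 2) :=
    (by fun_prop : Continuous fun v => x * v).div (by fun_prop) hdisc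
  have hderiv : ContinuousOn (fun s => R ^ 2 * (R + x * s) / √(R ^ 2 + x ^ 2 + 2 * R * x * s) ^ 3)
      (Set.uIcc (-1) 1) :=
    ContinuousOn.div (by fun_prop) (by fun_prop)
      fun s hs => pow_ne_zero _ (Real.sqrt_pos.mpr (sq_add_sq_add_two_mul_mul_pos hxR hs)).ne'
  have hsub := integral_comp_mul_deriv
    (g := fun v => (1 - v ^ 2) ^ j * (1 + x * v / √(R ^ 2 - x ^ 2 + x ^ 2 * v ^ 2)))
    (fun s hs => hasDerivAt_shellCos (sq_add_sq_add_two_mul_mul_pos hxR hs)) hderiv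
    ((by fun_prop : Continuous fun v : ℝ => (1 - v ^ 2) ^ j).mul (continuous_const.add hcont))
  rw [shellCos_one hxR, shellCos_neg_one hxR,
    integral_one_sub_sq_pow_mul_one_add_odd j hcont (fun v => by simp [neg_div])] at hsub
  simp only [Function.comp_apply] at hsub
  rw [integral_congr (fun s hs => shellCos_substitution_integrand j hxR hs), integral_const_mul] at hsub
  rw [← hsub, mul_div_cancel_left₀ _ (by positivity)]

end Shell

theorem stmt_0_general (k : ℕ) (hk : 1 ≤ k) (R x : ℝ) (hx : 0 ≤ x) (hxR : x < R) :
    ∫ s in (-1:ℝ)..1, (1 - s^2)^(k-1) / (R^2 + x^2 + 2*R*x*s) ^ ((2*(k:ℝ) - 1)/2) =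
      Real.sqrt π * Real.Gamma k / Real.Gamma (k + 1/2) / R ^ (2*k - 1) := by
  obtain ⟨j, rfl⟩ := Nat.exists_eq_add_of_le' hk
  have h := integral_one_sub_sq_pow_div_rpow j (abs_lt.mpr ⟨by linarith, hxR⟩)
  rw [integral_one_sub_sq_pow] at h
  rw [Nat.add_sub_cancel, show 2 * (j + 1) - 1 = 2 * j + 1 by omega,
    show (2 * ((j + 1 : ℕ) : ℝ) - 1) / 2 = (2 * j + 1) / 2 by push_cast; ring, h]
  push_cast
  rfl

theorem stmt_0 (k : ℕ) (hk : 1 ≤ k) (R x : ℝ) (hR : 0 < R) (hx : 0 ≤ x) (hxR : x < R) :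
    ∫ s in (-1:ℝ)..1, (1 - s^2)^(k-1) / (R^2 + x^2 + 2*R*x*s) ^ ((2*(k:ℝ) - 1)/2) =
      Real.sqrt π * Real.Gamma k / Real.Gamma (k + 1/2) / R ^ (2*k - 1) :=
  stmt_0_general k hk R x hx hxR
end

section
/- For all natural numbers k ≥ 2 and real numbers R > 0, 0 ≤ x < R, ∫_{-1}^{1} (1-s²)^{(2k-3)/2} / (R² + x² + 2Rxs)^{2(k-1)} ds ≥ (√π · Γ(k-1/2)/Γ(k)) · R^{-(4k-4)}, with equality if and only if x = 0. -/
/-!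
Write `q(t, s) = R² + t² + 2Rts = ‖R e + t ω‖²` for unit vectors `e, ω` of `ℝ^(m+2)` with
`⟪e, ω⟫ = s`, where `m = 2k - 2`. The weight `(1 - s²)^((m-1)/2)` is the density of `⟪e, ω⟫` for
`ω` uniform on the sphere, so `F(t) = ∫ (1 - s²)^((m-1)/2) / q(t, s)^m ds` is, up to a constant,
the mean of `y ↦ ‖R e + y‖^(-2m)` over the sphere of radius `t`. That function is subharmonic:
its Laplacian is `2m² ‖R e + y‖^(-2m-2)`. Averaging the polar form of the Laplacian over the sphere
kills the angular part, a total `s`-derivative of a flux vanishing at `s = ±1`, and leaves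
`(t^(m+1) F'(t))' = 2m² t^(m+1) ∫ (1 - s²)^((m-1)/2) / q^(m+1) > 0`. Hence `t^(m+1) F'` increases
from `0`, so `F` is strictly increasing on `[0, R)`, and `F(0) = R^(-2m) ∫ (1 - s²)^(k - 3/2)` is
computed by the Wallis recurrence.
-/

open Real intervalIntegral
open Set Metric Function MeasureTheory

theorem hasDerivAt_intervalIntegral_of_continuousOn {E : Type*} [NormedAddCommGroup E]
    [NormedSpace ℝ E] {f f' : ℝ → ℝ → E} {U : Set ℝ} {a b t₀ : ℝ} (hU : IsOpen U) (ht₀ : t₀ ∈ U)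
    (hf : ∀ t ∈ U, ContinuousOn (f t) (uIcc a b)) (hf' : ContinuousOn (uncurry f') (U ×ˢ uIcc a b))
    (hderiv : ∀ t ∈ U, ∀ s ∈ uIcc a b, HasDerivAt (f · s) (f' t s) t) :
    HasDerivAt (fun t ↦ ∫ s in a..b, f t s) (∫ s in a..b, f' t₀ s) t₀ := by
  obtain ⟨δ, hδ, hball⟩ := Metric.isOpen_iff.mp hU t₀ ht₀
  have hK : closedBall t₀ (δ / 2) ⊆ U :=
    (closedBall_subset_ball (by linarith)).trans hball
  obtain ⟨C, hC⟩ := (isCompact_closedBall t₀ (δ / 2)).prod isCompact_uIcc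
    |>.exists_bound_of_continuousOn (hf'.mono (prod_mono hK subset_rfl))
  refine (hasDerivAt_integral_of_dominated_loc_of_deriv_le (bound := fun _ ↦ C)
    (ball_mem_nhds t₀ (half_pos hδ)) ?_ (hf t₀ ht₀).intervalIntegrable ?_ ?_
    intervalIntegrable_const ?_).2
  · filter_upwards [hU.mem_nhds ht₀] with t ht
    exact ((hf t ht).mono uIoc_subset_uIcc).aestronglyMeasurable measurableSet_uIoc
  · exact ((hf'.uncurry_left t₀ ht₀).mono uIoc_subset_uIcc).aestronglyMeasurable
      measurableSet_uIoc
  · exact ae_of_all _ fun s hs t ht ↦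
      hC (t, s) ⟨ball_subset_closedBall ht, uIoc_subset_uIcc hs⟩
  · exact ae_of_all _ fun s hs t ht ↦
      hderiv t (hK (ball_subset_closedBall ht)) s (uIoc_subset_uIcc hs)

theorem strictMonoOn_of_hasDerivAt_pos {D : Set ℝ} (hD : Convex ℝ D) {g g' : ℝ → ℝ}
    (hg : ∀ t ∈ D, HasDerivAt g (g' t) t) (hpos : ∀ t ∈ interior D, 0 < g' t) :
    StrictMonoOn g D :=
  strictMonoOn_of_deriv_pos hD (fun t ht ↦ (hg t ht).continuousAt.continuousWithinAt)
    fun t ht ↦ (hg t (interior_subset ht)).deriv ▸ hpos t ht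

theorem continuous_one_sub_sq_rpow {γ : ℝ} (hγ : 0 ≤ γ) : Continuous fun s : ℝ ↦ (1 - s ^ 2) ^ γ :=
  (continuous_const.sub (continuous_pow 2)).rpow_const fun _ ↦ Or.inr hγ

theorem integral_one_sub_sq_rpow_recurrence {γ : ℝ} (hγ : 1 ≤ γ) :
    (2 * γ + 1) * ∫ s in (-1 : ℝ)..1, (1 - s ^ 2) ^ γ
      = 2 * γ * ∫ s in (-1 : ℝ)..1, (1 - s ^ 2) ^ (γ - 1) := by
  have hderiv : ∀ s ∈ uIcc (-1 : ℝ) 1, HasDerivAt (fun s : ℝ ↦ s * (1 - s ^ 2) ^ γ)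
      ((2 * γ + 1) * (1 - s ^ 2) ^ γ - 2 * γ * (1 - s ^ 2) ^ (γ - 1)) s := by
    intro s hs
    rw [uIcc_of_le (by norm_num)] at hs
    have hs' : 0 ≤ 1 - s ^ 2 := by nlinarith [hs.1, hs.2]
    refine ((hasDerivAt_id s).mul
      (((hasDerivAt_pow 2 s).const_sub 1).rpow_const (p := γ) (Or.inr hγ))).congr_deriv ?_
    rw [show (1 - s ^ 2) ^ γ = (1 - s ^ 2) ^ (γ - 1) * (1 - s ^ 2) by
      rw [← rpow_add_one' hs' (by linarith), sub_add_cancel]]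
    simp only [id, Nat.cast_ofNat, pow_one, Nat.add_one_sub_one]
    ring
  have hint : IntervalIntegrable (fun s : ℝ ↦ (1 - s ^ 2) ^ γ) volume (-1) 1 :=
    (continuous_one_sub_sq_rpow (by linarith)).intervalIntegrable _ _
  have hint' : IntervalIntegrable (fun s : ℝ ↦ (1 - s ^ 2) ^ (γ - 1)) volume (-1) 1 :=
    (continuous_one_sub_sq_rpow (by linarith)).intervalIntegrable _ _
  have hftc := integral_eq_sub_of_hasDerivAt hderiv
    ((hint.const_mul _).sub (hint'.const_mul _))
  rw [integral_sub (hint.const_mul _) (hint'.const_mul _), intervalIntegral.integral_const_mul,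
    intervalIntegral.integral_const_mul] at hftc
  norm_num [zero_rpow (by linarith : γ ≠ 0)] at hftc
  linarith

theorem integral_one_sub_sq_rpow_nat_add_half (j : ℕ) :
    ∫ s in (-1 : ℝ)..1, (1 - s ^ 2) ^ ((j : ℝ) + 1 / 2)
      = √π * Gamma ((j : ℝ) + 3 / 2) / Gamma ((j : ℝ) + 2) := by
  induction j with
  | zero =>
    simp_rw [CharP.cast_eq_zero, zero_add, ← sqrt_eq_rpow, integral_sqrt_one_sub_sq]
    rw [show (3 / 2 : ℝ) = 1 / 2 + 1 by norm_num, Gamma_add_one (by norm_num), Gamma_one_half_eq,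
      Gamma_two]
    field_simp
    rw [sq_sqrt pi_pos.le]
  | succ j ih =>
    have hrec := integral_one_sub_sq_rpow_recurrence (γ := (j + 1 : ℕ) + 1 / 2)
      (by push_cast; linarith [j.cast_nonneg (α := ℝ)])
    rw [show ((j + 1 : ℕ) : ℝ) + 1 / 2 - 1 = j + 1 / 2 by push_cast; ring, ih] at hrec
    rw [show ((j + 1 : ℕ) : ℝ) + 3 / 2 = (j + 3 / 2) + 1 by push_cast; ring,
      show ((j + 1 : ℕ) : ℝ) + 2 = (j + 2) + 1 by push_cast; ring,
      Gamma_add_one (by positivity), Gamma_add_one (by positivity)]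
    have hΓ : 0 < Gamma ((j : ℝ) + 2) := Gamma_pos_of_pos (by positivity)
    push_cast at hrec ⊢
    field_simp at hrec ⊢
    linarith

noncomputable section

def distSq (R t s : ℝ) : ℝ := R ^ 2 + t ^ 2 + 2 * R * t * s

def weight (m : ℕ) (s : ℝ) : ℝ := (1 - s ^ 2) ^ (((m : ℝ) - 1) / 2)

def kernel (m : ℕ) (R t s : ℝ) : ℝ := weight m s / distSq R t s ^ m

def kernelDeriv (m : ℕ) (R t s : ℝ) : ℝ :=
  -(m * (2 * t + 2 * R * s) * weight m s) / distSq R t s ^ (m + 1)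

def angularFlux (m : ℕ) (R t s : ℝ) : ℝ := weight (m + 2) s / distSq R t s ^ (m + 1)

def angularFluxDeriv (m : ℕ) (R t s : ℝ) : ℝ :=
  -((m + 1) * weight m s * (s * distSq R t s + 2 * R * t * (1 - s ^ 2))) / distSq R t s ^ (m + 2)

end

theorem distSq_pos {R t s : ℝ} (ht : |t| < R) (hs : s ∈ Icc (-1) 1) : 0 < distSq R t s := by
  have hts : |t * s| ≤ |t| := by
    rw [abs_mul]
    exact mul_le_of_le_one_right (abs_nonneg t) (abs_le.mpr hs)
  have hR : 0 < R := (abs_nonneg t).trans_lt ht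
  unfold distSq
  nlinarith [sq_abs t, neg_abs_le (t * s), mul_pos (sub_pos.mpr ht) (sub_pos.mpr ht)]

theorem continuous_weight {m : ℕ} (hm : 0 < m) : Continuous (weight m) :=
  (continuous_const.sub (continuous_pow 2)).rpow_const fun _ ↦ Or.inr <| by
    have : (1 : ℝ) ≤ m := by exact_mod_cast hm
    linarith

theorem weight_pos {m : ℕ} {s : ℝ} (hs : s ∈ Ioo (-1) 1) : 0 < weight m s :=
  rpow_pos_of_pos (by nlinarith [hs.1, hs.2]) _

theorem weight_add_two {m : ℕ} {s : ℝ} (hs : s ∈ Icc (-1) 1) :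
    weight (m + 2) s = (1 - s ^ 2) * weight m s := by
  have hm : (0 : ℝ) ≤ m := m.cast_nonneg
  unfold weight
  rw [mul_comm, ← rpow_add_one' (by nlinarith [hs.1, hs.2]) (by linarith)]
  push_cast
  ring_nf

theorem weight_add_two_eq_zero {m : ℕ} {s : ℝ} (hs : s ^ 2 = 1) :
    weight (m + 2) s = 0 := by
  unfold weight
  rw [hs, sub_self]
  have hm : (0 : ℝ) ≤ m := m.cast_nonneg
  exact zero_rpow (by push_cast; linarith)

theorem hasDerivAt_distSq_left (R t s : ℝ) :
    HasDerivAt (distSq R · s) (2 * t + 2 * R * s) t :=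
  (((hasDerivAt_pow 2 t).const_add (R ^ 2)).add
    (((hasDerivAt_id t).const_mul (2 * R)).mul_const s)).congr_deriv (by simp)

theorem hasDerivAt_distSq_right (R t s : ℝ) :
    HasDerivAt (distSq R t) (2 * R * t) s :=
  (((hasDerivAt_id s).const_mul (2 * R * t)).const_add (R ^ 2 + t ^ 2)).congr_deriv (by simp)

theorem hasDerivAt_kernel (m : ℕ) {R t s : ℝ} (hq : distSq R t s ≠ 0) :
    HasDerivAt (kernel m R · s) (kernelDeriv m R t s) t := by
  refine ((hasDerivAt_const t (weight m s)).div ((hasDerivAt_distSq_left R t s).pow m)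
    (pow_ne_zero m hq)).congr_deriv ?_
  unfold kernelDeriv
  rcases m with _ | m
  · simp
  · simp only [Pi.pow_apply, Nat.add_sub_cancel]
    field_simp
    push_cast
    ring

theorem hasDerivAt_angularFlux {m : ℕ} (hm : 0 < m) {R t s : ℝ} (hs : s ∈ Icc (-1) 1)
    (hq : distSq R t s ≠ 0) :
    HasDerivAt (angularFlux m R t) (angularFluxDeriv m R t s) s := by
  have hm' : (1 : ℝ) ≤ m := by exact_mod_cast hm
  have hw : HasDerivAt (weight (m + 2)) (-((m + 1) * s * weight m s)) s := by
    refine (((hasDerivAt_pow 2 s).const_sub 1).rpow_const (Or.inr ?_)).congr_deriv ?_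
    · push_cast; linarith
    · unfold weight
      push_cast
      rw [show ((m : ℝ) + 2 - 1) / 2 - 1 = ((m : ℝ) - 1) / 2 by ring]
      simp only [pow_one]
      ring
  refine (hw.div ((hasDerivAt_distSq_right R t s).pow (m + 1)) (pow_ne_zero _ hq)).congr_deriv ?_
  unfold angularFluxDeriv
  simp only [Pi.pow_apply, Nat.add_sub_cancel]
  rw [weight_add_two hs]
  field_simp
  push_cast
  ring

/-- Polar form of `Δ ‖R e + y‖^(-2m) = 2m² ‖R e + y‖^(-2m-2)` in `ℝ^(m+2)`, times `t^(m+1)` and the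
weight: the radial part is on the left, the angular part is the last term. -/
theorem hasDerivAt_pow_mul_kernelDeriv (m : ℕ) {R t s : ℝ} (hq : distSq R t s ≠ 0) :
    HasDerivAt (fun t ↦ t ^ (m + 1) * kernelDeriv m R t s)
      (2 * m ^ 2 * t ^ (m + 1) * weight m s / distSq R t s ^ (m + 1)
        + 2 * m * R * t ^ m * angularFluxDeriv m R t s) t := by
  have hnum : HasDerivAt (fun t ↦ -(m * (2 * t + 2 * R * s) * weight m s))
      (-(m * 2 * weight m s)) t :=
    ((((hasDerivAt_id t).const_mul 2).add_const (2 * R * s)).const_mul (m : ℝ)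
      |>.mul_const (weight m s) |>.neg).congr_deriv (by ring)
  refine ((hasDerivAt_pow (m + 1) t).mul
    (hnum.div ((hasDerivAt_distSq_left R t s).pow (m + 1)) (pow_ne_zero _ hq))).congr_deriv ?_
  unfold angularFluxDeriv
  simp only [Pi.div_apply, Pi.pow_apply, Nat.add_sub_cancel]
  field_simp
  unfold distSq
  push_cast
  ring

theorem continuousOn_div_distSq_pow {R : ℝ} {g : ℝ → ℝ → ℝ} (hg : Continuous (uncurry g))
    (N : ℕ) :
    ContinuousOn (uncurry fun t s ↦ g t s / distSq R t s ^ N) (Ioo (-R) R ×ˢ Icc (-1) 1) :=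
  hg.continuousOn.div (by unfold distSq; fun_prop) fun p hp ↦
    pow_ne_zero _ (distSq_pos (abs_lt.mpr hp.1) hp.2).ne'

theorem continuousOn_kernel {m : ℕ} (hm : 0 < m) (R : ℝ) :
    ContinuousOn (uncurry (kernel m R)) (Ioo (-R) R ×ˢ Icc (-1) 1) :=
  continuousOn_div_distSq_pow (g := fun _ s ↦ weight m s)
    ((continuous_weight hm).comp continuous_snd) m

theorem continuousOn_kernelDeriv {m : ℕ} (hm : 0 < m) (R : ℝ) :
    ContinuousOn (uncurry (kernelDeriv m R)) (Ioo (-R) R ×ˢ Icc (-1) 1) :=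
  continuousOn_div_distSq_pow (g := fun t s ↦ -(m * (2 * t + 2 * R * s) * weight m s))
    (by have := continuous_weight hm; fun_prop) (m + 1)

theorem continuousOn_angularFluxDeriv {m : ℕ} (hm : 0 < m) (R : ℝ) :
    ContinuousOn (uncurry (angularFluxDeriv m R)) (Ioo (-R) R ×ˢ Icc (-1) 1) :=
  continuousOn_div_distSq_pow (g := fun t s ↦
    -((m + 1) * weight m s * (s * distSq R t s + 2 * R * t * (1 - s ^ 2))))
    (by have := continuous_weight hm; unfold distSq; fun_prop) (m + 2)

theorem intervalIntegrable_weight_div_distSq_pow {m : ℕ} (hm : 0 < m) {R t : ℝ} (ht : |t| < R)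
    (N : ℕ) : IntervalIntegrable (fun s ↦ weight m s / distSq R t s ^ N) volume (-1) 1 :=
  ((continuousOn_div_distSq_pow (R := R) (g := fun _ s ↦ weight m s)
    ((continuous_weight hm).comp continuous_snd) N).uncurry_left t (abs_lt.mp ht)
    ).intervalIntegrable_of_Icc (by norm_num)

theorem integral_weight_div_distSq_pow_pos {m : ℕ} (hm : 0 < m) {R t : ℝ} (ht : |t| < R)
    (N : ℕ) : 0 < ∫ s in (-1 : ℝ)..1, weight m s / distSq R t s ^ N :=
  intervalIntegral_pos_of_pos_on (intervalIntegrable_weight_div_distSq_pow hm ht N)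
    (fun s hs ↦ div_pos (weight_pos hs) (pow_pos (distSq_pos ht (Ioo_subset_Icc_self hs)) N))
    (by norm_num)

theorem intervalIntegrable_angularFluxDeriv {m : ℕ} (hm : 0 < m) {R t : ℝ} (ht : |t| < R) :
    IntervalIntegrable (angularFluxDeriv m R t) volume (-1) 1 :=
  ((continuousOn_angularFluxDeriv hm R).uncurry_left t (abs_lt.mp ht)).intervalIntegrable_of_Icc
    (by norm_num)

theorem integral_angularFluxDeriv {m : ℕ} (hm : 0 < m) {R t : ℝ} (ht : |t| < R) :
    ∫ s in (-1 : ℝ)..1, angularFluxDeriv m R t s = 0 := by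
  have hI : uIcc (-1 : ℝ) 1 = Icc (-1) 1 := uIcc_of_le (by norm_num)
  rw [integral_eq_sub_of_hasDerivAt (f := angularFlux m R t)
    (fun s hs ↦ hasDerivAt_angularFlux hm (hI ▸ hs) (distSq_pos ht (hI ▸ hs)).ne')
    (intervalIntegrable_angularFluxDeriv hm ht)]
  simp [angularFlux, weight_add_two_eq_zero]

theorem hasDerivAt_integral_kernel {m : ℕ} (hm : 0 < m) {R t : ℝ} (ht : t ∈ Ioo (-R) R) :
    HasDerivAt (fun t ↦ ∫ s in (-1 : ℝ)..1, kernel m R t s)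
      (∫ s in (-1 : ℝ)..1, kernelDeriv m R t s) t := by
  have hI : uIcc (-1 : ℝ) 1 = Icc (-1) 1 := uIcc_of_le (by norm_num)
  refine hasDerivAt_intervalIntegral_of_continuousOn isOpen_Ioo ht
    (fun t ht ↦ hI ▸ (continuousOn_kernel hm R).uncurry_left t ht)
    (hI ▸ continuousOn_kernelDeriv hm R) fun t ht s hs ↦ ?_
  exact hasDerivAt_kernel m (distSq_pos (abs_lt.mpr ht) (hI ▸ hs)).ne'

theorem hasDerivAt_integral_pow_mul_kernelDeriv {m : ℕ} (hm : 0 < m) {R t : ℝ}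
    (ht : t ∈ Ioo (-R) R) :
    HasDerivAt (fun t ↦ ∫ s in (-1 : ℝ)..1, t ^ (m + 1) * kernelDeriv m R t s)
      (2 * m ^ 2 * t ^ (m + 1) * ∫ s in (-1 : ℝ)..1, weight m s / distSq R t s ^ (m + 1)) t := by
  have hI : uIcc (-1 : ℝ) 1 = Icc (-1) 1 := uIcc_of_le (by norm_num)
  have hw := continuous_weight hm
  have hD : ContinuousOn (uncurry fun t s ↦ 2 * m ^ 2 * t ^ (m + 1) * weight m s
      / distSq R t s ^ (m + 1) + 2 * m * R * t ^ m * angularFluxDeriv m R t s)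
      (Ioo (-R) R ×ˢ Icc (-1) 1) :=
    (continuousOn_div_distSq_pow (g := fun t s ↦ 2 * m ^ 2 * t ^ (m + 1) * weight m s)
      (by fun_prop) (m + 1)).add
    ((continuous_const.mul (continuous_fst.pow m)).continuousOn.mul
      (continuousOn_angularFluxDeriv hm R))
  have hderiv := hasDerivAt_intervalIntegral_of_continuousOn isOpen_Ioo ht
    (fun t ht ↦ hI ▸ ContinuousOn.uncurry_left
      (f := fun t s ↦ t ^ (m + 1) * kernelDeriv m R t s) t ht
      ((continuous_fst.pow (m + 1)).continuousOn.mul (continuousOn_kernelDeriv hm R)))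
    (hI ▸ hD) fun t ht s hs ↦
      hasDerivAt_pow_mul_kernelDeriv m (distSq_pos (abs_lt.mpr ht) (hI ▸ hs)).ne'
  have ht' : |t| < R := abs_lt.mpr ht
  simp_rw [mul_div_assoc] at hderiv
  rwa [integral_add ((intervalIntegrable_weight_div_distSq_pow hm ht' _).const_mul _)
    ((intervalIntegrable_angularFluxDeriv hm ht').const_mul _),
    intervalIntegral.integral_const_mul, intervalIntegral.integral_const_mul,
    integral_angularFluxDeriv hm ht', mul_zero, add_zero] at hderiv

theorem integral_kernelDeriv_pos {m : ℕ} (hm : 0 < m) {R t : ℝ} (ht : t ∈ Ioo 0 R) :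
    0 < ∫ s in (-1 : ℝ)..1, kernelDeriv m R t s := by
  have hmono : StrictMonoOn (fun t ↦ ∫ s in (-1 : ℝ)..1, t ^ (m + 1) * kernelDeriv m R t s)
      (Ico 0 R) := by
    refine strictMonoOn_of_hasDerivAt_pos (convex_Ico 0 R)
      (fun t ht ↦ hasDerivAt_integral_pow_mul_kernelDeriv hm ⟨by linarith [ht.1, ht.2], ht.2⟩)
      fun t ht ↦ ?_
    rw [interior_Ico] at ht
    have hm' : (0 : ℝ) < m := by exact_mod_cast hm
    exact mul_pos (by have := ht.1; positivity)
      (integral_weight_div_distSq_pow_pos hm (abs_lt.mpr ⟨by linarith [ht.1, ht.2], ht.2⟩) _)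
  have hlt := hmono ⟨le_rfl, ht.1.trans ht.2⟩ (Ioo_subset_Ico_self ht) ht.1
  simp only [intervalIntegral.integral_const_mul] at hlt
  rw [zero_pow (Nat.succ_ne_zero m), zero_mul] at hlt
  exact pos_of_mul_pos_right hlt (pow_pos ht.1 _).le

theorem strictMonoOn_integral_kernel {m : ℕ} (hm : 0 < m) (R : ℝ) :
    StrictMonoOn (fun t ↦ ∫ s in (-1 : ℝ)..1, kernel m R t s) (Ico 0 R) :=
  strictMonoOn_of_hasDerivAt_pos (convex_Ico 0 R)
    (fun t ht ↦ hasDerivAt_integral_kernel hm ⟨by linarith [ht.1, ht.2], ht.2⟩)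
    fun t ht ↦ integral_kernelDeriv_pos hm (by rwa [interior_Ico] at ht)

theorem stmt_2 (k : ℕ) (hk : 2 ≤ k) (R x : ℝ) (hR : 0 < R) (hx : 0 ≤ x) (hxR : x < R) :
    (∫ s in (-1:ℝ)..1, (1 - s^2) ^ ((2*(k:ℝ) - 3)/2) / (R^2 + x^2 + 2*R*x*s) ^ (2*(k - 1))) ≥
      Real.sqrt π * Real.Gamma ((k:ℝ) - 1/2) / Real.Gamma k / R ^ (4*k - 4) ∧
    ((∫ s in (-1:ℝ)..1, (1 - s^2) ^ ((2*(k:ℝ) - 3)/2) / (R^2 + x^2 + 2*R*x*s) ^ (2*(k - 1))) =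
      Real.sqrt π * Real.Gamma ((k:ℝ) - 1/2) / Real.Gamma k / R ^ (4*k - 4) ↔ x = 0) := by
  obtain ⟨j, rfl⟩ : ∃ j, k = j + 2 := ⟨k - 2, by omega⟩
  have hexp : (((2 * (j + 2 - 1) : ℕ) : ℝ) - 1) / 2 = j + 1 / 2 := by push_cast; ring
  have hexp' : (2 * ((j + 2 : ℕ) : ℝ) - 3) / 2 = j + 1 / 2 := by push_cast; ring
  have hkernel : ∀ t, ∫ s in (-1:ℝ)..1, (1 - s ^ 2) ^ ((2 * ((j + 2 : ℕ) : ℝ) - 3) / 2)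
      / (R ^ 2 + t ^ 2 + 2 * R * t * s) ^ (2 * (j + 2 - 1))
      = ∫ s in (-1:ℝ)..1, kernel (2 * (j + 2 - 1)) R t s := by
    simp only [kernel, weight, distSq, hexp, hexp', implies_true]
  have hcenter : ∫ s in (-1:ℝ)..1, kernel (2 * (j + 2 - 1)) R 0 s
      = √π * Gamma (((j + 2 : ℕ) : ℝ) - 1 / 2) / Gamma ((j + 2 : ℕ) : ℝ)
        / R ^ (4 * (j + 2) - 4) := by
    have hR4 : (R ^ 2) ^ (2 * (j + 2 - 1)) = R ^ (4 * (j + 2) - 4) := by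
      rw [← pow_mul]; congr 1; omega
    simp only [kernel, weight, distSq, hexp, ne_eq, OfNat.ofNat_ne_zero, not_false_eq_true,
      zero_pow, add_zero, mul_zero, zero_mul, hR4, intervalIntegral.integral_div,
      integral_one_sub_sq_rpow_nat_add_half]
    rw [show ((j + 2 : ℕ) : ℝ) - 1 / 2 = j + 3 / 2 by push_cast; ring]
    push_cast
    rfl
  have hmono := strictMonoOn_integral_kernel (m := 2 * (j + 2 - 1)) (by omega) R
  have h0 : (0 : ℝ) ∈ Ico 0 R := ⟨le_rfl, hR⟩
  have hxI : x ∈ Ico 0 R := ⟨hx, hxR⟩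
  rw [hkernel, ← hcenter]
  exact ⟨(hmono.le_iff_le h0 hxI).mpr hx, hmono.injOn.eq_iff hxI h0⟩
end

section
/- For all natural numbers k ≥ 2 and real numbers R > 0, 0 ≤ x < R, ∫_{-1}^{1} (1-s²)^{(2k-3)/2} / (R² + x² + 2Rxs)^{k-1} ds = (√π · Γ(k-1/2)/Γ(k)) · R^{-2(k-1)}. -/
/-!
Substituting `s = cos θ` turns the integral into `G(x) = ∫₀^π sin^{2m} θ / D^m dθ`, where
`D = R² + x² + 2Rx cos θ` and `m = k - 1`. Up to normalisation this is
the mean of the Newtonian kernel `|z - ·|^{-2m}` of `ℝ^{2m+2}` over the sphere of radius `R`, taken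
at a point `z` with `|z| = x`, so it is a radial harmonic function of `z` on the ball and satisfies
`(x^{2m+1} G')' = 0`. Concretely, `∂ₓ (x^{2m+1} (x + R cos θ) sin^{2m} θ / D^{m+1})` is the
`θ`-derivative of a function vanishing at `0` and `π`. Hence `x^{2m+1} G'(x)` is constant, equal to
its value `0` at `x = 0`, so `G(x) = G(0) = R^{-2m} ∫₀^π sin^{2m}`, a Wallis integral.
-/

open Real intervalIntegral
open MeasureTheory Set Metric
open scoped Interval

section ParametricIntegral

variable {𝕜 E : Type*} [RCLike 𝕜] [NormedAddCommGroup E] [NormedSpace ℝ E] [NormedSpace 𝕜 E]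

theorem intervalIntegral.hasDerivAt_integral_of_continuousOn {F F' : 𝕜 → ℝ → E} {U : Set 𝕜}
    {x₀ : 𝕜} {a b : ℝ} (hU : IsOpen U) (hx₀ : x₀ ∈ U)
    (hF : ∀ x ∈ U, ContinuousOn (F x) [[a, b]])
    (hF' : ContinuousOn (fun p : 𝕜 × ℝ => F' p.1 p.2) (U ×ˢ [[a, b]]))
    (hderiv : ∀ x ∈ U, ∀ t ∈ [[a, b]], HasDerivAt (F · t) (F' x t) x) :
    HasDerivAt (fun x => ∫ t in a..b, F x t) (∫ t in a..b, F' x₀ t) x₀ := by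
  obtain ⟨ε, hε, hball⟩ := isOpen_iff.mp hU x₀ hx₀
  have hsub : closedBall x₀ (ε / 2) ⊆ U :=
    (closedBall_subset_ball (half_lt_self hε)).trans hball
  obtain ⟨C, hC⟩ := ((isCompact_closedBall x₀ (ε / 2)).prod isCompact_uIcc)
    |>.exists_bound_of_continuousOn (hF'.mono (prod_mono hsub subset_rfl))
  have hIoc : Ι a b ⊆ [[a, b]] := uIoc_subset_uIcc
  have hF'x₀ : ContinuousOn (F' x₀) [[a, b]] :=
    hF'.comp (Continuous.prodMk_right x₀).continuousOn fun t ht => ⟨hx₀, ht⟩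
  refine (hasDerivAt_integral_of_dominated_loc_of_deriv_le (bound := fun _ => C)
    (closedBall_mem_nhds x₀ (half_pos hε)) ?_ (hF x₀ hx₀).intervalIntegrable
    ((hF'x₀.mono hIoc).aestronglyMeasurable measurableSet_uIoc) ?_ intervalIntegrable_const ?_).2
  · filter_upwards [hU.mem_nhds hx₀] with x hx
    exact ((hF x hx).mono hIoc).aestronglyMeasurable measurableSet_uIoc
  · exact ae_of_all _ fun t ht x hx => hC (x, t) ⟨hx, hIoc ht⟩
  · exact ae_of_all _ fun t ht x hx => hderiv x (hsub hx) t (hIoc ht)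

end ParametricIntegral

theorem eq_of_hasDerivAt_eq_zero_on_Ioo {f : ℝ → ℝ} {a b : ℝ} (hab : a ≤ b)
    (hf : ContinuousOn f (Icc a b)) (hf' : ∀ x ∈ Ioo a b, HasDerivAt f 0 x) : f a = f b := by
  rcases hab.eq_or_lt with rfl | hlt
  · rfl
  obtain ⟨c, -, hc⟩ := exists_hasDerivAt_eq_slope f (fun _ => 0) hlt hf hf'
  rw [eq_comm, div_eq_zero_iff, sub_eq_zero] at hc
  exact (hc.resolve_right (sub_ne_zero.mpr hlt.ne')).symm

theorem integral_comp_cos_mul_sin {g : ℝ → ℝ} (hg : ContinuousOn g (Icc (-1) 1)) :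
    ∫ θ in (0)..π, g (cos θ) * sin θ = ∫ s in (-1)..1, g s := by
  have h := integral_comp_mul_deriv' (a := 0) (b := π) (f := cos) (f' := fun θ => -sin θ) (g := g)
    (fun θ _ => hasDerivAt_cos θ) continuous_sin.neg.continuousOn
    (hg.mono (image_subset_iff.mpr fun θ _ => ⟨neg_one_le_cos θ, cos_le_one θ⟩))
  rw [cos_zero, cos_pi, integral_symm (-1) 1] at h
  simpa only [Function.comp_apply, mul_neg, intervalIntegral.integral_neg, neg_inj] using h

theorem integral_sin_pow_two_mul_eq_Gamma (m : ℕ) :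
    ∫ θ in (0)..π, sin θ ^ (2 * m) = √π * Gamma (m + 1 / 2) / Gamma (m + 1) := by
  induction m with
  | zero =>
    simp only [mul_zero, pow_zero, integral_one, CharP.cast_eq_zero, zero_add, Gamma_one_half_eq,
      Gamma_one, div_one]
    rw [mul_self_sqrt pi_pos.le]
    simp
  | succ m ih =>
    have hΓhalf : Gamma ((m + 1 : ℕ) + 1 / 2) = (m + 1 / 2) * Gamma (m + 1 / 2) := by
      rw [← Gamma_add_one (by positivity)]; push_cast; ring_nf
    have hΓ : Gamma ((m + 1 : ℕ) + 1) = (m + 1) * Gamma (m + 1) := by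
      rw [← Gamma_add_one (by positivity)]; push_cast; ring_nf
    rw [mul_add_one, integral_sin_pow, ih, hΓhalf, hΓ, sin_zero, sin_pi,
      zero_pow (by omega)]
    simp only [zero_mul, sub_zero, zero_div, zero_add]
    field_simp
    push_cast
    ring

noncomputable section

namespace SphereMean

/-- The squared distance `|x e + R ω|²` for unit vectors `e`, `ω` at angle `θ`. -/
def sqDist (R x θ : ℝ) : ℝ := R ^ 2 + x ^ 2 + 2 * R * x * cos θ

def kernel (m : ℕ) (R x θ : ℝ) : ℝ := sin θ ^ (2 * m) / sqDist R x θ ^ m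

def radialKernel (m : ℕ) (R x θ : ℝ) : ℝ :=
  (x + R * cos θ) * sin θ ^ (2 * m) / sqDist R x θ ^ (m + 1)

def flux (m : ℕ) (R x θ : ℝ) : ℝ :=
  R * x ^ (2 * m) * sin θ ^ (2 * m + 1) / sqDist R x θ ^ (m + 1)

def fluxDeriv (m : ℕ) (R x θ : ℝ) : ℝ :=
  R * x ^ (2 * m) * sin θ ^ (2 * m) *
    ((2 * m + 1) * cos θ * sqDist R x θ + 2 * (m + 1) * R * x * sin θ ^ 2) / sqDist R x θ ^ (m + 2)

theorem sq_add_sq_add_mul_pos {R x s : ℝ} (hx : |x| < R) (hs : |s| ≤ 1) :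
    0 < R ^ 2 + x ^ 2 + 2 * R * x * s := by
  have hxs : |x * s| ≤ |x| := by
    rw [abs_mul]; exact mul_le_of_le_one_right (abs_nonneg x) hs
  have hR : 0 < R := (abs_nonneg x).trans_lt hx
  nlinarith [neg_abs_le (x * s), sq_abs x]

theorem sqDist_pos {R x : ℝ} (hx : |x| < R) (θ : ℝ) : 0 < sqDist R x θ :=
  sq_add_sq_add_mul_pos hx (abs_cos_le_one θ)

@[fun_prop]
theorem continuous_sqDist (R : ℝ) : Continuous fun p : ℝ × ℝ => sqDist R p.1 p.2 := by
  unfold sqDist; fun_prop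

theorem hasDerivAt_sqDist_left (R x θ : ℝ) :
    HasDerivAt (sqDist R · θ) (2 * x + 2 * R * cos θ) x := by
  unfold sqDist
  exact (((hasDerivAt_pow 2 x).const_add (R ^ 2)).fun_add
    (((hasDerivAt_id' x).const_mul (2 * R)).mul_const (cos θ))).congr_deriv (by ring)

theorem hasDerivAt_sqDist_right (R x θ : ℝ) :
    HasDerivAt (sqDist R x) (-(2 * R * x * sin θ)) θ := by
  unfold sqDist
  exact (((hasDerivAt_cos θ).const_mul (2 * R * x)).const_add (R ^ 2 + x ^ 2)).congr_deriv (by ring)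

theorem hasDerivAt_kernel_left (m : ℕ) {R x : ℝ} (θ : ℝ) (hD : sqDist R x θ ≠ 0) :
    HasDerivAt (kernel m R · θ) (-(2 * m) * radialKernel m R x θ) x := by
  unfold kernel radialKernel
  cases m with
  | zero => simpa using hasDerivAt_const x (1 : ℝ)
  | succ n =>
    refine ((hasDerivAt_const x _).fun_div ((hasDerivAt_sqDist_left R x θ).fun_pow (n + 1))
      (pow_ne_zero _ hD)).congr_deriv ?_
    simp only [Nat.add_sub_cancel]
    field_simp
    ring

theorem hasDerivAt_pow_mul_radialKernel (m : ℕ) {R x : ℝ} (θ : ℝ) (hD : sqDist R x θ ≠ 0) :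
    HasDerivAt (fun y => y ^ (2 * m + 1) * radialKernel m R y θ) (fluxDeriv m R x θ) x := by
  unfold radialKernel
  refine ((hasDerivAt_pow (2 * m + 1) x).fun_mul
    ((((hasDerivAt_id' x).add_const (R * cos θ)).mul_const (sin θ ^ (2 * m))).fun_div
      ((hasDerivAt_sqDist_left R x θ).fun_pow (m + 1)) (pow_ne_zero _ hD))).congr_deriv ?_
  unfold fluxDeriv
  simp only [Nat.add_sub_cancel]
  rw [sin_sq]
  field_simp
  unfold sqDist
  push_cast
  ring

theorem hasDerivAt_flux (m : ℕ) {R x : ℝ} (θ : ℝ) (hD : sqDist R x θ ≠ 0) :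
    HasDerivAt (flux m R x) (fluxDeriv m R x θ) θ := by
  unfold flux
  refine ((((hasDerivAt_sin θ).fun_pow (2 * m + 1)).const_mul (R * x ^ (2 * m))).fun_div
    ((hasDerivAt_sqDist_right R x θ).fun_pow (m + 1)) (pow_ne_zero _ hD)).congr_deriv ?_
  unfold fluxDeriv
  simp only [Nat.add_sub_cancel]
  field_simp
  push_cast
  ring

theorem continuousOn_radialKernel (m : ℕ) (R : ℝ) :
    ContinuousOn (fun p : ℝ × ℝ => radialKernel m R p.1 p.2) {p | |p.1| < R} := by
  unfold radialKernel
  exact ContinuousOn.div (by fun_prop) (by fun_prop) fun p hp =>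
    pow_ne_zero _ (sqDist_pos hp p.2).ne'

theorem continuousOn_fluxDeriv (m : ℕ) (R : ℝ) :
    ContinuousOn (fun p : ℝ × ℝ => fluxDeriv m R p.1 p.2) {p | |p.1| < R} := by
  unfold fluxDeriv
  exact ContinuousOn.div (by fun_prop) (by fun_prop) fun p hp =>
    pow_ne_zero _ (sqDist_pos hp p.2).ne'

theorem continuous_kernel (m : ℕ) {R x : ℝ} (hx : |x| < R) : Continuous (kernel m R x) := by
  unfold kernel
  exact Continuous.div (by fun_prop) (by fun_prop) fun θ => pow_ne_zero _ (sqDist_pos hx θ).ne'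

theorem integral_fluxDeriv_eq_zero (m : ℕ) {R x : ℝ} (hx : |x| < R) :
    ∫ θ in (0)..π, fluxDeriv m R x θ = 0 := by
  have hcont : Continuous (fluxDeriv m R x) :=
    continuousOn_univ.mp <| (continuousOn_fluxDeriv m R).comp
      (Continuous.prodMk_right x).continuousOn fun _ _ => hx
  rw [integral_eq_sub_of_hasDerivAt (fun θ _ => hasDerivAt_flux m θ (sqDist_pos hx θ).ne')
    (hcont.intervalIntegrable _ _)]
  simp [flux]

theorem isOpen_abs_lt (R : ℝ) : IsOpen {y : ℝ | |y| < R} :=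
  isOpen_lt continuous_abs continuous_const

theorem integral_radialKernel_eq_zero (m : ℕ) {R x : ℝ} (hx : 0 < x) (hxR : x < R) :
    ∫ θ in (0)..π, radialKernel m R x θ = 0 := by
  set J : ℝ → ℝ := fun y => ∫ θ in (0)..π, y ^ (2 * m + 1) * radialKernel m R y θ
  have hJ : ∀ y, |y| < R → HasDerivAt J 0 y := by
    intro y hy
    rw [← integral_fluxDeriv_eq_zero m hy]
    refine hasDerivAt_integral_of_continuousOn (isOpen_abs_lt R) hy (fun z hz => ?_)
      ((continuousOn_fluxDeriv m R).mono fun p hp => hp.1)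
      fun z hz θ _ => hasDerivAt_pow_mul_radialKernel m θ (sqDist_pos hz θ).ne'
    exact (continuous_const.continuousOn.mul ((continuousOn_radialKernel m R).comp
      (Continuous.prodMk_right z).continuousOn fun _ _ => hz))
  have hsub : ∀ y ∈ Icc 0 x, |y| < R := fun y hy => by
    rw [abs_of_nonneg hy.1]; exact hy.2.trans_lt hxR
  have hJx : J 0 = J x := eq_of_hasDerivAt_eq_zero_on_Ioo hx.le
    (fun y hy => (hJ y (hsub y hy)).continuousAt.continuousWithinAt)
    fun y hy => hJ y (hsub y (Ioo_subset_Icc_self hy))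
  simp only [J, intervalIntegral.integral_const_mul] at hJx
  rw [zero_pow (by omega), zero_mul] at hJx
  exact (mul_eq_zero.mp hJx.symm).resolve_left (pow_ne_zero _ hx.ne')

theorem integral_kernel_eq_integral_kernel_zero (m : ℕ) {R x : ℝ} (hx : 0 ≤ x) (hxR : x < R) :
    ∫ θ in (0)..π, kernel m R x θ = ∫ θ in (0)..π, kernel m R 0 θ := by
  have hG : ∀ y, |y| < R → HasDerivAt (fun y => ∫ θ in (0)..π, kernel m R y θ)
      (∫ θ in (0)..π, -(2 * m) * radialKernel m R y θ) y := fun y hy =>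
    hasDerivAt_integral_of_continuousOn (isOpen_abs_lt R) hy
      (fun z hz => (continuous_kernel m hz).continuousOn)
      (continuousOn_const.mul ((continuousOn_radialKernel m R).mono fun p hp => hp.1))
      fun z hz θ _ => hasDerivAt_kernel_left m θ (sqDist_pos hz θ).ne'
  have hsub : ∀ y ∈ Icc 0 x, |y| < R := fun y hy => by
    rw [abs_of_nonneg hy.1]; exact hy.2.trans_lt hxR
  refine (eq_of_hasDerivAt_eq_zero_on_Ioo hx
    (fun y hy => (hG y (hsub y hy)).continuousAt.continuousWithinAt) fun y hy => ?_).symm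
  simpa only [intervalIntegral.integral_const_mul,
    integral_radialKernel_eq_zero m hy.1 (hy.2.trans hxR), mul_zero]
    using hG y (hsub y (Ioo_subset_Icc_self hy))

theorem integral_kernel_zero (m : ℕ) (R : ℝ) :
    ∫ θ in (0)..π, kernel m R 0 θ = (∫ θ in (0)..π, sin θ ^ (2 * m)) / R ^ (2 * m) := by
  simp [kernel, sqDist, ← pow_mul, intervalIntegral.integral_div]

theorem sq_rpow_mul_self {a : ℝ} (ha : 0 ≤ a) {m : ℕ} (hm : 1 ≤ m) :
    (a ^ 2) ^ ((2 * (m : ℝ) - 1) / 2) * a = a ^ (2 * m) := by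
  rw [← rpow_natCast a 2, ← rpow_mul ha,
    show ((2 : ℕ) : ℝ) * ((2 * m - 1) / 2) = ((2 * m - 1 : ℕ) : ℝ) by
      push_cast [Nat.cast_sub (by omega : 1 ≤ 2 * m)]; ring,
    rpow_natCast, ← pow_succ]
  congr 1; omega

theorem integral_eq_integral_kernel {m : ℕ} (hm : 1 ≤ m) {R x : ℝ} (hx : |x| < R) :
    ∫ s in (-1)..1, (1 - s ^ 2) ^ ((2 * (m : ℝ) - 1) / 2) / (R ^ 2 + x ^ 2 + 2 * R * x * s) ^ m =
      ∫ θ in (0)..π, kernel m R x θ := by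
  have hexp : 0 ≤ (2 * (m : ℝ) - 1) / 2 := by
    have : (1 : ℝ) ≤ m := by exact_mod_cast hm
    linarith
  have hg : ContinuousOn (fun s : ℝ => (1 - s ^ 2) ^ ((2 * (m : ℝ) - 1) / 2) /
      (R ^ 2 + x ^ 2 + 2 * R * x * s) ^ m) (Icc (-1) 1) :=
    ((continuous_const.sub (continuous_pow 2)).continuousOn.rpow_const fun _ _ => Or.inr hexp).div
      (by fun_prop) fun s hs => pow_ne_zero _ (sq_add_sq_add_mul_pos hx (abs_le.mpr hs)).ne'
  rw [← integral_comp_cos_mul_sin hg]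
  refine integral_congr fun θ hθ => ?_
  rw [uIcc_of_le pi_pos.le] at hθ
  rw [kernel, sqDist, ← sin_sq, div_mul_eq_mul_div,
    sq_rpow_mul_self (sin_nonneg_of_nonneg_of_le_pi hθ.1 hθ.2) hm]

end SphereMean

end

open SphereMean in
theorem stmt_3_general (k : ℕ) (hk : 2 ≤ k) (R x : ℝ) (hx : 0 ≤ x) (hxR : x < R) :
    (∫ s in (-1:ℝ)..1, (1 - s^2) ^ ((2*(k:ℝ) - 3)/2) / (R^2 + x^2 + 2*R*x*s) ^ (k - 1)) =
      Real.sqrt π * Real.Gamma ((k:ℝ) - 1/2) / Real.Gamma k / R ^ (2*(k - 1)) := by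
  obtain ⟨m, rfl⟩ : ∃ m, k = m + 1 := ⟨k - 1, by omega⟩
  have hexp : (2 * ((m + 1 : ℕ) : ℝ) - 3) / 2 = (2 * (m : ℝ) - 1) / 2 := by push_cast; ring
  rw [hexp, Nat.add_sub_cancel,
    integral_eq_integral_kernel (by omega) ((abs_of_nonneg hx).trans_lt hxR),
    integral_kernel_eq_integral_kernel_zero m hx hxR, integral_kernel_zero,
    integral_sin_pow_two_mul_eq_Gamma]
  push_cast
  ring_nf

theorem stmt_3 (k : ℕ) (hk : 2 ≤ k) (R x : ℝ) (hR : 0 < R) (hx : 0 ≤ x) (hxR : x < R) :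
    (∫ s in (-1:ℝ)..1, (1 - s^2) ^ ((2*(k:ℝ) - 3)/2) / (R^2 + x^2 + 2*R*x*s) ^ (k - 1)) =
      Real.sqrt π * Real.Gamma ((k:ℝ) - 1/2) / Real.Gamma k / R ^ (2*(k - 1)) :=
  stmt_3_general k hk R x hx hxR
end

section
/- Let k ≥ 1 be a natural number and t ≥ 0 an integer. Then ∑_{i=0}^{t} [4^i · Γ(k+i) · (k - 1/2) · (-1)^{t-i} / (Γ(k) · (k - 1/2 + i) · i! · (t-i)!)] · Γ(i + 2k - 1 + t)/Γ(2i + 2k - 1) = (2k-1) · Γ(2k+t-1) / ((2k+2t-1) · Γ(2k-1) · Γ(t+1)). In particular this quantity is positive. -/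
open Real Finset Polynomial

lemma desc_smeval (x : ℝ) (n : ℕ) :
    (descPochhammer ℤ n).smeval x = ∏ j ∈ range n, (x - j) := by
  induction n with
  | zero => simp [descPochhammer_zero]
  | succ n ih =>
      rw [descPochhammer_succ_right, smeval_mul, ih, prod_range_succ, smeval_sub, smeval_X,
        smeval_natCast]
      simp

lemma vander (x z : ℝ) (t : ℕ) :
    ∑ i ∈ range (t+1), (t.choose i : ℝ) * ((∏ j ∈ range i, (x - j)) * ∏ j ∈ range (t-i), (z - j))
      = ∏ j ∈ range t, (x + z - j) := by
  have h := Ring.descPochhammer_smeval_add (R := ℝ) (r := x) (s := z) t (Commute.all x z)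
  rw [Finset.Nat.sum_antidiagonal_eq_sum_range_succ_mk] at h
  simp only [desc_smeval] at h
  rw [← h]

lemma gamma_add_nat (x : ℝ) (hx : 0 < x) (n : ℕ) :
    Real.Gamma (x + n) = (∏ j ∈ range n, (x + j)) * Real.Gamma x := by
  induction n with
  | zero => simp
  | succ n ih =>
      have hxn : x + n ≠ 0 := by positivity
      rw [show x + ((n:ℕ)+1:ℕ) = (x + n) + 1 by push_cast; ring, Real.Gamma_add_one hxn, ih,
        prod_range_succ]
      ring

lemma gamma_desc (x : ℝ) (n : ℕ) (h : 0 < x + 1 - n) :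
    Real.Gamma (x + 1) = (∏ j ∈ range n, (x - j)) * Real.Gamma (x + 1 - n) := by
  induction n with
  | zero => simp
  | succ n ih =>
      have h' : 0 < x + 1 - n := by push_cast at h ⊢; linarith
      have hne : x + 1 - (n+1:ℕ) ≠ 0 := ne_of_gt h
      have key : Real.Gamma (x + 1 - n) = (x - n) * Real.Gamma (x + 1 - (n+1:ℕ)) := by
        rw [show x + 1 - (n:ℝ) = (x + 1 - ((n:ℕ)+1:ℕ)) + 1 by push_cast; ring,
          Real.Gamma_add_one hne]
        push_cast; ring_nf
      rw [ih h', key, prod_range_succ]; push_cast; ring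

lemma gamma_half (n : ℕ) :
    Real.Gamma ((n:ℝ) + 1/2) = (Nat.factorial (2*n)) * Real.sqrt π / (Nat.factorial n * 4^n) := by
  induction n with
  | zero => simpa using Real.Gamma_one_half_eq
  | succ n ih =>
      have hne : (n:ℝ) + 1/2 ≠ 0 := by positivity
      rw [show ((n:ℕ)+1:ℕ) + (1:ℝ)/2 = ((n:ℝ) + 1/2) + 1 by push_cast; ring,
        Real.Gamma_add_one hne, ih]
      rw [show 2*(n+1) = (2*n+1)+1 by ring, Nat.factorial_succ, Nat.factorial_succ,
        Nat.factorial_succ]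
      have h4 : ((Nat.factorial n : ℝ)) * 4^n ≠ 0 := by positivity
      field_simp
      push_cast
      ring

lemma neg_prod (y : ℝ) (n : ℕ) :
    ∏ j ∈ range n, (-y - j) = (-1)^n * ∏ j ∈ range n, (y + j) := by
  induction n with
  | zero => simp
  | succ n ih => rw [prod_range_succ, prod_range_succ, ih]; ring

lemma gnat (x : ℝ) (n : ℕ) (h : x = n + 1) : Real.Gamma x = Nat.factorial n := by
  rw [h, Real.Gamma_nat_eq_factorial]

theorem stmt_4 (k : ℕ) (hk : 1 ≤ k) (t : ℕ) :
    (∑ i ∈ Finset.range (t + 1),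
        (4:ℝ)^i * Real.Gamma ((k:ℝ) + i) * ((k:ℝ) - 1/2) * (-1:ℝ)^(t - i) /
          (Real.Gamma k * ((k:ℝ) - 1/2 + i) * (Nat.factorial i) * (Nat.factorial (t - i))) *
          (Real.Gamma ((i:ℝ) + 2*k - 1 + t) / Real.Gamma (2*(i:ℝ) + 2*k - 1))) =
      (2*(k:ℝ) - 1) * Real.Gamma (2*(k:ℝ) + t - 1) /
        ((2*(k:ℝ) + 2*t - 1) * Real.Gamma (2*(k:ℝ) - 1) * Real.Gamma ((t:ℝ) + 1)) ∧
    0 < (2*(k:ℝ) - 1) * Real.Gamma (2*(k:ℝ) + t - 1) /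
        ((2*(k:ℝ) + 2*t - 1) * Real.Gamma (2*(k:ℝ) - 1) * Real.Gamma ((t:ℝ) + 1)) := by
  obtain ⟨m, rfl⟩ : ∃ m, k = m + 1 := ⟨k - 1, (Nat.succ_pred_eq_of_pos hk).symm⟩
  have fpos : ∀ n : ℕ, (0:ℝ) < n.factorial := fun n => by exact_mod_cast n.factorial_pos
  have fne : ∀ n : ℕ, ((n.factorial : ℝ)) ≠ 0 := fun n => (fpos n).ne'
  have hsπ : (0:ℝ) < Real.sqrt π := Real.sqrt_pos.mpr Real.pi_pos
  have hR1 : Real.Gamma (2*((m+1:ℕ):ℝ) + t - 1) = (2*m+t).factorial :=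
    gnat _ _ (by push_cast; ring)
  have hR2 : Real.Gamma (2*((m+1:ℕ):ℝ) - 1) = (2*m).factorial :=
    gnat _ _ (by push_cast; ring)
  have hR3 : Real.Gamma ((t:ℝ) + 1) = t.factorial := gnat _ _ (by push_cast; ring)
  have e1 : 2*((m+1:ℕ):ℝ) - 1 = 2*(m:ℝ) + 1 := by push_cast; ring
  have e2 : 2*((m+1:ℕ):ℝ) + 2*(t:ℝ) - 1 = 2*(m:ℝ) + 2*(t:ℝ) + 1 := by push_cast; ring
  rw [hR1, hR2, hR3, e1, e2]
  constructor
  · -- the main identity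
    set x : ℝ := -((2*m+t:ℕ):ℝ) - 1 with hxd
    set z : ℝ := (m:ℝ) + (t:ℝ) + 1/2 with hzd
    set c : ℝ := (-1:ℝ)^t * ((2*m+t).factorial : ℝ) * ((m:ℝ)+1/2)
        * (((m:ℝ)+(t:ℝ)+1) * ((m+t).factorial : ℝ)) * 4^(t+1)
        / (((m).factorial : ℝ) * ((t).factorial : ℝ)
          * ((2*(m:ℝ)+2*(t:ℝ)+2) * ((2*(m:ℝ)+2*(t:ℝ)+1) * ((2*(m+t)).factorial : ℝ)))) with hcd
    have key : ∀ i ∈ range (t+1),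
        (4:ℝ)^i * Real.Gamma (((m+1:ℕ):ℝ) + i) * (((m+1:ℕ):ℝ) - 1/2) * (-1:ℝ)^(t - i) /
          (Real.Gamma ((m+1:ℕ):ℝ) * (((m+1:ℕ):ℝ) - 1/2 + i) * (Nat.factorial i) *
            (Nat.factorial (t - i))) *
          (Real.Gamma ((i:ℝ) + 2*((m+1:ℕ):ℝ) - 1 + t) / Real.Gamma (2*(i:ℝ) + 2*((m+1:ℕ):ℝ) - 1))
        = c * ((t.choose i : ℝ) *
            ((∏ j ∈ range i, (x - j)) * ∏ j ∈ range (t-i), (z - j))) := by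
      intro i hi
      have hi' : i ≤ t := Nat.lt_succ_iff.mp (mem_range.mp hi)
      have hic : (i:ℝ) ≤ t := by exact_mod_cast hi'
      have hm0 : (0:ℝ) ≤ m := Nat.cast_nonneg m
      have hi0 : (0:ℝ) ≤ i := Nat.cast_nonneg i
      have hg1 : Real.Gamma (((m+1:ℕ):ℝ) + i) = ((m+i).factorial : ℝ) :=
        gnat _ _ (by push_cast; ring)
      have hg2 : Real.Gamma ((m+1:ℕ):ℝ) = (m.factorial : ℝ) := gnat _ _ (by push_cast; ring)
      have hg3 : Real.Gamma ((i:ℝ) + 2*((m+1:ℕ):ℝ) - 1 + t) = ((2*m+t+i).factorial : ℝ) :=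
        gnat _ _ (by push_cast; ring)
      have hg4 : Real.Gamma (2*(i:ℝ) + 2*((m+1:ℕ):ℝ) - 1) = ((2*m+2*i).factorial : ℝ) :=
        gnat _ _ (by push_cast; ring)
      have hsign : ((-1:ℝ))^(t-i) = (-1:ℝ)^t * (-1:ℝ)^i := by
        have h1 : ((-1:ℝ))^(t-i) * (-1:ℝ)^i = (-1:ℝ)^t := by
          rw [← pow_add, Nat.sub_add_cancel hi']
        have h2 : ((-1:ℝ))^i * (-1:ℝ)^i = 1 := by
          rw [← pow_add, ← two_mul, pow_mul]; norm_num
        calc ((-1:ℝ))^(t-i) = ((-1:ℝ))^(t-i) * (((-1:ℝ))^i * (-1:ℝ)^i) := by rw [h2, mul_one]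
          _ = (-1:ℝ)^t * (-1:ℝ)^i := by rw [← mul_assoc, h1]
      -- evaluate P
      have hy : (0:ℝ) < ((2*m+t:ℕ):ℝ) + 1 := by positivity
      have hPg := gamma_add_nat (((2*m+t:ℕ):ℝ) + 1) hy i
      rw [gnat _ (2*m+t) rfl, gnat _ (2*m+t+i) (by push_cast; ring)] at hPg
      have hP : (∏ j ∈ range i, (x - j))
          = (-1:ℝ)^i * (((2*m+t+i).factorial : ℝ) / ((2*m+t).factorial : ℝ)) := by
        have hstep : ∏ j ∈ range i, (x - (j:ℝ))
            = ∏ j ∈ range i, (-(((2*m+t:ℕ):ℝ)+1) - (j:ℝ)) :=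
          Finset.prod_congr rfl (fun j _ => by rw [hxd]; ring)
        rw [hstep, neg_prod]
        congr 1
        rw [eq_div_iff (fne _)]
        exact hPg.symm
      -- evaluate Q
      have hti : ((t-i:ℕ):ℝ) = (t:ℝ) - i := Nat.cast_sub hi'
      have hzpos : 0 < z + 1 - ((t-i:ℕ):ℝ) := by rw [hti, hzd]; linarith
      have hQg := gamma_desc z (t-i) hzpos
      rw [show z + 1 = ((m+t+1:ℕ):ℝ) + 1/2 by rw [hzd]; push_cast; ring] at hQg
      rw [show ((m+t+1:ℕ):ℝ) + 1/2 - ((t-i:ℕ):ℝ) = ((m+i+1:ℕ):ℝ) + 1/2 by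
          rw [hti]; push_cast; ring] at hQg
      rw [gamma_half, gamma_half] at hQg
      have hQ : (∏ j ∈ range (t-i), (z - j))
          = (((2*(m+t+1)).factorial : ℝ) * Real.sqrt π / (((m+t+1).factorial : ℝ) * 4^(m+t+1)))
            / (((2*(m+i+1)).factorial : ℝ) * Real.sqrt π
              / (((m+i+1).factorial : ℝ) * 4^(m+i+1))) := by
        rw [eq_div_iff (by
          apply div_ne_zero (mul_ne_zero (fne _) hsπ.ne')
          positivity)]
        exact hQg.symm
      rw [show 2*(m+i+1) = 2*m+2*i+1+1 by ring, show 2*(m+t+1) = 2*(m+t)+1+1 by ring] at hQ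
      simp only [Nat.factorial_succ] at hQ
      rw [hg1, hg2, hg3, hg4, hsign, hP, hQ, hcd, Nat.cast_choose ℝ hi']
      rw [show ((m+1:ℕ):ℝ) - 1/2 + (i:ℝ) = (m:ℝ)+(i:ℝ)+1/2 by push_cast; ring]
      rw [show ((m+1:ℕ):ℝ) - 1/2 = (m:ℝ)+1/2 by push_cast; ring]
      have hd1 : (m:ℝ)+(i:ℝ)+1/2 ≠ 0 := by positivity
      push_cast
      field_simp
      ring
    rw [Finset.sum_congr rfl key, ← Finset.mul_sum, vander x z t]
    have hxz : ∀ j ∈ range t, x + z - (j:ℝ) = -((m:ℝ)+1/2) - j := fun j _ => by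
      rw [hxd, hzd]; push_cast; ring
    rw [Finset.prod_congr rfl hxz, neg_prod]
    have hRg := gamma_add_nat ((m:ℝ)+1/2) (by positivity) t
    rw [show (m:ℝ)+1/2+(t:ℕ) = ((m+t:ℕ):ℝ)+1/2 by push_cast; ring] at hRg
    rw [gamma_half, gamma_half] at hRg
    have hprod : (∏ j ∈ range t, ((m:ℝ)+1/2+j))
        = (((2*(m+t)).factorial : ℝ) * Real.sqrt π / (((m+t).factorial : ℝ) * 4^(m+t)))
          / (((2*m).factorial : ℝ) * Real.sqrt π / ((m.factorial : ℝ) * 4^m)) := by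
      rw [eq_div_iff (by
        apply div_ne_zero (mul_ne_zero (fne _) hsπ.ne')
        positivity)]
      exact hRg.symm
    rw [hprod, hcd]
    have h1 : (0:ℝ) < 2*(m:ℝ)+2*(t:ℝ)+1 := by positivity
    have h2 : (0:ℝ) < 2*(m:ℝ)+2*(t:ℝ)+2 := by positivity
    have ht2 : ((-1:ℝ))^(t*2) = 1 := by
      rw [mul_comm, pow_mul]; norm_num
    field_simp
    ring_nf
    rw [ht2]
    ring
  · -- positivity
    exact div_pos (by positivity) (by positivity)
end

section
/- Let k ≥ 1 be a natural number and t ≥ 1 an integer. Then ∑_{i=0}^{t} [4^i · Γ((2k-1)/4 + i) · Γ((2k+1)/4 + i) · Γ(k+1/2) · (-1)^{t-i} / (Γ((2k-1)/4) · Γ((2k+1)/4) · Γ(k+1/2+i) · i! · (t-i)!)] · Γ((4i+2k-1)/2 + t - i)/Γ((4i+2k-1)/2) = 0. -/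
open Real Finset

private lemma gamma_prod (x : ℝ) (hx : 0 < x) (n : ℕ) :
    Real.Gamma (x + n) = Real.Gamma x * ∏ j ∈ Finset.range n, (x + j) := by
  induction n with
  | zero => simp
  | succ n ih =>
    have h : x + ((n : ℕ) + 1 : ℕ) = (x + n) + 1 := by push_cast; ring
    rw [h, Real.Gamma_add_one (by positivity), ih, Finset.prod_range_succ]
    ring

private lemma dup_prod (s : ℝ) : ∀ i : ℕ,
    ∏ j ∈ Finset.range (2*i), (s + j) =
      ∏ j ∈ Finset.range i, ((s + 2*j) * (s + 2*j + 1)) := by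
  intro i
  induction i with
  | zero => simp
  | succ i ih =>
    have h2 : 2 * (i+1) = (2*i) + 1 + 1 := by ring
    rw [h2, Finset.prod_range_succ, Finset.prod_range_succ, ih, Finset.prod_range_succ]
    push_cast
    ring

private lemma term_eq (k t i : ℕ) (hk : 1 ≤ k) (ht : 1 ≤ t) (hi : i ≤ t) :
    (4:ℝ)^i * Real.Gamma ((2*(k:ℝ) - 1)/4 + i) * Real.Gamma ((2*(k:ℝ) + 1)/4 + i) *
      Real.Gamma ((k:ℝ) + 1/2) * (-1:ℝ)^(t - i) /
      (Real.Gamma ((2*(k:ℝ) - 1)/4) * Real.Gamma ((2*(k:ℝ) + 1)/4) *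
        Real.Gamma ((k:ℝ) + 1/2 + i) * (Nat.factorial i) * (Nat.factorial (t - i))) *
      (Real.Gamma ((4*(i:ℝ) + 2*k - 1)/2 + t - i) / Real.Gamma ((4*(i:ℝ) + 2*k - 1)/2))
    = (((k:ℝ) - 1/2) / (Nat.factorial t)) *
        ((-1:ℝ)^(t-i) * (t.choose i) *
          ∏ j ∈ Finset.range (t-1), ((k:ℝ) + 1/2 + i + j)) := by
  have hk1 : (1:ℝ) ≤ (k:ℝ) := by exact_mod_cast hk
  have ha : 0 < (2*(k:ℝ) - 1)/4 := by linarith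
  have hb : 0 < (2*(k:ℝ) + 1)/4 := by linarith
  have hc : 0 < (k:ℝ) + 1/2 := by linarith
  have hd : 0 < (4*(i:ℝ) + 2*k - 1)/2 := by
    have : (0:ℝ) ≤ i := Nat.cast_nonneg i
    linarith
  have harg : (4*(i:ℝ) + 2*k - 1)/2 + t - i
      = (4*(i:ℝ) + 2*k - 1)/2 + ((t - i : ℕ):ℝ) := by
    rw [Nat.cast_sub hi]; ring
  rw [harg, gamma_prod _ ha i, gamma_prod _ hb i, gamma_prod _ hc i, gamma_prod _ hd (t-i)]
  set Ga := Real.Gamma ((2*(k:ℝ) - 1)/4) with hGa'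
  set Gb := Real.Gamma ((2*(k:ℝ) + 1)/4) with hGb'
  set Gc := Real.Gamma ((k:ℝ) + 1/2) with hGc'
  set Gd := Real.Gamma ((4*(i:ℝ) + 2*k - 1)/2) with hGd'
  set Pa := ∏ j ∈ Finset.range i, ((2*(k:ℝ) - 1)/4 + j) with hPa
  set Pb := ∏ j ∈ Finset.range i, ((2*(k:ℝ) + 1)/4 + j) with hPb
  set Pc := ∏ j ∈ Finset.range i, ((k:ℝ) + 1/2 + j) with hPc'
  set Pd := ∏ j ∈ Finset.range (t-i), ((4*(i:ℝ) + 2*k - 1)/2 + j) with hPd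
  set Q := ∏ j ∈ Finset.range (t-1), ((k:ℝ) + 1/2 + i + j) with hQ
  have key : (4:ℝ)^i * Pa * Pb * Pd = ((k:ℝ) - 1/2) * Pc * Q := by
    rw [hPa, hPb, hPc', hPd, hQ]
    have h0 : (4:ℝ)^i = ∏ _j ∈ Finset.range i, (4:ℝ) := by
      rw [Finset.prod_const, Finset.card_range]
    have h1 : (4:ℝ)^i * (∏ j ∈ Finset.range i, ((2*(k:ℝ) - 1)/4 + j)) *
        (∏ j ∈ Finset.range i, ((2*(k:ℝ) + 1)/4 + j))
        = ∏ j ∈ Finset.range (2*i), (((k:ℝ) - 1/2) + j) := by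
      rw [dup_prod, h0, ← Finset.prod_mul_distrib, ← Finset.prod_mul_distrib]
      refine Finset.prod_congr rfl fun j _ => ?_
      ring
    have h2 : (∏ j ∈ Finset.range (2*i), (((k:ℝ) - 1/2) + j)) *
        (∏ j ∈ Finset.range (t-i), ((4*(i:ℝ) + 2*k - 1)/2 + j))
        = ∏ j ∈ Finset.range (t+i), (((k:ℝ) - 1/2) + j) := by
      have hn : t + i = 2*i + (t - i) := by omega
      rw [hn, Finset.prod_range_add]
      congr 1
      refine Finset.prod_congr rfl fun j _ => ?_
      push_cast; ring
    have h3 : ∏ j ∈ Finset.range (t+i), (((k:ℝ) - 1/2) + j)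
        = ((k:ℝ) - 1/2) * ∏ j ∈ Finset.range (i + (t-1)), (((k:ℝ) + 1/2) + j) := by
      have hn : t + i = (i + (t-1)) + 1 := by omega
      rw [hn, Finset.prod_range_succ', mul_comm]
      congr 1
      · push_cast; ring
      · refine Finset.prod_congr rfl fun j _ => ?_
        push_cast; ring
    have h4 : ∏ j ∈ Finset.range (i + (t-1)), (((k:ℝ) + 1/2) + j)
        = (∏ j ∈ Finset.range i, ((k:ℝ) + 1/2 + j)) *
          (∏ j ∈ Finset.range (t-1), ((k:ℝ) + 1/2 + i + j)) := by
      rw [Finset.prod_range_add]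
      congr 1
      refine Finset.prod_congr rfl fun j _ => ?_
      push_cast; ring
    rw [h1, h2, h3, h4]
    ring
  have hfac : ((t.choose i : ℝ)) * (Nat.factorial i) * (Nat.factorial (t-i))
      = (Nat.factorial t : ℝ) := by
    exact_mod_cast congrArg (Nat.cast (R := ℝ)) (Nat.choose_mul_factorial_mul_factorial hi)
  have hGa : Ga ≠ 0 := (Real.Gamma_pos_of_pos ha).ne'
  have hGb : Gb ≠ 0 := (Real.Gamma_pos_of_pos hb).ne'
  have hGc : Gc ≠ 0 := (Real.Gamma_pos_of_pos hc).ne'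
  have hGd : Gd ≠ 0 := (Real.Gamma_pos_of_pos hd).ne'
  have hPc : Pc ≠ 0 := by
    rw [hPc']
    refine (Finset.prod_pos fun j _ => ?_).ne'
    have : (0:ℝ) ≤ j := Nat.cast_nonneg j
    linarith
  have hfi : ((Nat.factorial i : ℕ) : ℝ) ≠ 0 := by positivity
  have hfti : ((Nat.factorial (t-i) : ℕ) : ℝ) ≠ 0 := by positivity
  have hft : ((Nat.factorial t : ℕ) : ℝ) ≠ 0 := by positivity
  rw [div_mul_div_comm, div_mul_eq_mul_div, div_eq_div_iff
    (by exact mul_ne_zero (mul_ne_zero (mul_ne_zero (mul_ne_zero (mul_ne_zero hGa hGb)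
      (mul_ne_zero hGc hPc)) hfi) hfti) hGd) hft]
  linear_combination (Ga * Gb * Gc * Gd * (-1:ℝ)^(t-i) * (Nat.factorial t : ℝ)) * key
    - (Ga * Gb * Gc * Gd * (-1:ℝ)^(t-i) * ((k:ℝ) - 1/2) * Pc * Q) * hfac

private lemma fd_zero : ∀ (m : ℕ) (c : ℝ) (n : ℕ), m < n →
    (fwdDiff (1:ℕ))^[n] (fun i : ℕ => ∏ j ∈ Finset.range m, (c + i + j)) = 0 := by
  intro m
  induction m with
  | zero =>
    intro c n hn
    obtain ⟨n, rfl⟩ : ∃ n', n = n' + 1 := ⟨n - 1, by omega⟩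
    rw [Function.iterate_succ_apply]
    have h1 : fwdDiff (1:ℕ) (fun i : ℕ => ∏ j ∈ Finset.range 0, (c + i + j)) = 0 := by
      funext i; simp [fwdDiff]
    rw [h1]
    have h0 : fwdDiff (1:ℕ) (0 : ℕ → ℝ) = 0 := by
      funext i; simp [fwdDiff]
    exact Function.iterate_fixed h0 n
  | succ m ih =>
    intro c n hn
    obtain ⟨n, rfl⟩ : ∃ n', n = n' + 1 := ⟨n - 1, by omega⟩
    rw [Function.iterate_succ_apply]
    have key : fwdDiff (1:ℕ) (fun i : ℕ => ∏ j ∈ Finset.range (m+1), (c + i + j))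
        = ((m : ℝ) + 1) • (fun i : ℕ => ∏ j ∈ Finset.range m, ((c+1) + i + j)) := by
      funext i
      simp only [fwdDiff, Pi.smul_apply, smul_eq_mul]
      rw [Finset.prod_range_succ, Finset.prod_range_succ']
      have e1 : ∀ j ∈ Finset.range m, (c + ((i+1:ℕ):ℝ) + j) = ((c+1) + i + j) := by
        intro j _; push_cast; ring
      have e2 : ∀ j ∈ Finset.range m, (c + (i:ℝ) + ((j+1:ℕ):ℝ)) = ((c+1) + i + j) := by
        intro j _; push_cast; ring
      rw [Finset.prod_congr rfl e1, Finset.prod_congr rfl e2]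
      push_cast
      ring
    rw [key, fwdDiff_iter_const_smul, ih (c+1) n (by omega), smul_zero]

theorem stmt_5 (k : ℕ) (hk : 1 ≤ k) (t : ℕ) (ht : 1 ≤ t) :
    (∑ i ∈ Finset.range (t + 1),
        (4:ℝ)^i * Real.Gamma ((2*(k:ℝ) - 1)/4 + i) * Real.Gamma ((2*(k:ℝ) + 1)/4 + i) *
          Real.Gamma ((k:ℝ) + 1/2) * (-1:ℝ)^(t - i) /
          (Real.Gamma ((2*(k:ℝ) - 1)/4) * Real.Gamma ((2*(k:ℝ) + 1)/4) *
            Real.Gamma ((k:ℝ) + 1/2 + i) * (Nat.factorial i) * (Nat.factorial (t - i))) *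
          (Real.Gamma ((4*(i:ℝ) + 2*k - 1)/2 + t - i) / Real.Gamma ((4*(i:ℝ) + 2*k - 1)/2))) = 0 := by
  have hQ := fwdDiff_iter_eq_sum_shift (1:ℕ)
    (fun i : ℕ => ∏ j ∈ Finset.range (t-1), ((k:ℝ) + 1/2 + i + j)) t 0
  rw [fd_zero (t-1) ((k:ℝ) + 1/2) t (by omega)] at hQ
  simp only [Pi.zero_apply, zero_add, smul_eq_mul, mul_one, zsmul_eq_mul] at hQ
  push_cast at hQ
  calc (∑ i ∈ Finset.range (t + 1),
        (4:ℝ)^i * Real.Gamma ((2*(k:ℝ) - 1)/4 + i) * Real.Gamma ((2*(k:ℝ) + 1)/4 + i) *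
          Real.Gamma ((k:ℝ) + 1/2) * (-1:ℝ)^(t - i) /
          (Real.Gamma ((2*(k:ℝ) - 1)/4) * Real.Gamma ((2*(k:ℝ) + 1)/4) *
            Real.Gamma ((k:ℝ) + 1/2 + i) * (Nat.factorial i) * (Nat.factorial (t - i))) *
          (Real.Gamma ((4*(i:ℝ) + 2*k - 1)/2 + t - i) / Real.Gamma ((4*(i:ℝ) + 2*k - 1)/2)))
      = ∑ i ∈ Finset.range (t + 1), (((k:ℝ) - 1/2) / (Nat.factorial t)) *
          ((-1:ℝ)^(t-i) * (t.choose i) *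
            ∏ j ∈ Finset.range (t-1), ((k:ℝ) + 1/2 + i + j)) := by
        refine Finset.sum_congr rfl fun i hi => ?_
        exact term_eq k t i hk ht (by simpa [Nat.lt_succ_iff] using Finset.mem_range.mp hi)
    _ = (((k:ℝ) - 1/2) / (Nat.factorial t)) *
          ∑ i ∈ Finset.range (t + 1), ((-1:ℝ)^(t-i) * (t.choose i) *
            ∏ j ∈ Finset.range (t-1), ((k:ℝ) + 1/2 + i + j)) := by
        rw [Finset.mul_sum]
    _ = 0 := by
        rw [← hQ, mul_zero]
end

section
/- Let 0 < R₁ < R₂, n ≥ 3, and let D = B₂' \ closure(B₁), where B₁ is the open ball of radius R₁ centered at the origin and B₂' is an open ball of radius R₂ with closure(B₁) ⊂ B₂'. Let Ω₀ be the annulus {x ∈ ℝⁿ : R₁ < |x| < R₂}. Then ∫_D |∇(1/R₁^{n-2} − 1/|x|^{n-2})|² dx ≤ ∫_{Ω₀} |∇(1/R₁^{n-2} − 1/|x|^{n-2})|² dx, i.e., ∫_D (n-2)²/|x|^{2(n-1)} dx ≤ ∫_{Ω₀} (n-2)²/|x|^{2(n-1)} dx, with equality if and only if D = Ω₀. -/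
/-!
Both `D = B(c, R₂) \ B̄(0, R₁)` and the annulus `Ω₀ = B(0, R₂) \ B̄(0, R₁)` have the volume of
`B(0, R₂)` minus that of `B̄(0, R₁)`, so `D \ Ω₀` and `Ω₀ \ D` have equal volume. The integrand
`(n - 2)² / |x|^(2(n-1))` is a strictly decreasing function of `|x|`; it is at most its value at
`|x| = R₂` on `D \ Ω₀`, where `|x| ≥ R₂`, and strictly larger on `Ω₀ \ D`, where `|x| < R₂`.
Moving mass from `Ω₀ \ D` to `D \ Ω₀` can therefore only decrease the integral, strictly so as soon
as `c ≠ 0`, because then `D \ Ω₀` contains a nonempty open set.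
-/

open MeasureTheory Metric Set

section SetIntegral

variable {α : Type*} [MeasurableSpace α] {μ : Measure α} {f g : α → ℝ} {s t : Set α}

theorem setIntegral_lt_setIntegral_of_forall_lt (hs : MeasurableSet s) (hμs : μ s ≠ 0)
    (hf : IntegrableOn f s μ) (hg : IntegrableOn g s μ) (hfg : ∀ x ∈ s, f x < g x) :
    ∫ x in s, f x ∂μ < ∫ x in s, g x ∂μ := by
  have hpos : 0 < ∫ x in s, (g x - f x) ∂μ := by
    rw [setIntegral_pos_iff_support_of_nonneg_ae (f := fun x => g x - f x) _ (hg.sub hf)]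
    · refine (pos_iff_ne_zero.2 hμs).trans_le (measure_mono fun x hx => ⟨?_, hx⟩)
      exact (sub_pos.2 (hfg x hx)).ne'
    · filter_upwards [ae_restrict_mem hs] with x hx using (sub_pos.2 (hfg x hx)).le
  rw [integral_sub hg hf] at hpos
  linarith

theorem setIntegral_sub_setIntegral_eq_sdiff (hs : MeasurableSet s) (ht : MeasurableSet t)
    (hfs : IntegrableOn f s μ) (hft : IntegrableOn f t μ) :
    ∫ x in s, f x ∂μ - ∫ x in t, f x ∂μ = ∫ x in s \ t, f x ∂μ - ∫ x in t \ s, f x ∂μ := by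
  rw [← integral_inter_add_sdiff ht hfs, ← integral_inter_add_sdiff hs hft, inter_comm]
  ring

theorem setIntegral_sdiff_le_setIntegral_const_sdiff (hs : MeasurableSet s) (ht : MeasurableSet t)
    (hst : μ s = μ t) (hμs : μ s ≠ ⊤) (hfs : IntegrableOn f s μ) {m : ℝ}
    (hle : ∀ x ∈ s \ t, f x ≤ m) :
    ∫ x in s \ t, f x ∂μ ≤ ∫ _ in t \ s, m ∂μ := by
  have hμst : μ (s \ t) = μ (t \ s) := measure_sdiff_symm hs.nullMeasurableSet
    ht.nullMeasurableSet hst (measure_ne_top_of_subset inter_subset_left hμs)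
  calc ∫ x in s \ t, f x ∂μ ≤ ∫ _ in s \ t, m ∂μ :=
        setIntegral_mono_on (hfs.mono_set sdiff_subset)
          (integrableOn_const (measure_ne_top_of_subset sdiff_subset hμs)) (hs.diff ht) hle
    _ = ∫ _ in t \ s, m ∂μ := by simp only [setIntegral_const, Measure.real, hμst]

theorem setIntegral_le_setIntegral_of_measure_eq (hs : MeasurableSet s) (ht : MeasurableSet t)
    (hst : μ s = μ t) (hμs : μ s ≠ ⊤) (hfs : IntegrableOn f s μ) (hft : IntegrableOn f t μ)
    {m : ℝ} (hle : ∀ x ∈ s \ t, f x ≤ m) (hge : ∀ x ∈ t \ s, m ≤ f x) :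
    ∫ x in s, f x ∂μ ≤ ∫ x in t, f x ∂μ := by
  have hsdiff : ∫ x in s \ t, f x ∂μ ≤ ∫ x in t \ s, f x ∂μ :=
    (setIntegral_sdiff_le_setIntegral_const_sdiff hs ht hst hμs hfs hle).trans <|
      setIntegral_mono_on (integrableOn_const (measure_ne_top_of_subset sdiff_subset (hst ▸ hμs)))
        (hft.mono_set sdiff_subset) (ht.diff hs) hge
  linarith [setIntegral_sub_setIntegral_eq_sdiff hs ht hfs hft]

theorem setIntegral_lt_setIntegral_of_measure_eq (hs : MeasurableSet s) (ht : MeasurableSet t)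
    (hst : μ s = μ t) (hμs : μ s ≠ ⊤) (hfs : IntegrableOn f s μ) (hft : IntegrableOn f t μ)
    {m : ℝ} (hle : ∀ x ∈ s \ t, f x ≤ m) (hgt : ∀ x ∈ t \ s, m < f x) (hμts : μ (t \ s) ≠ 0) :
    ∫ x in s, f x ∂μ < ∫ x in t, f x ∂μ := by
  have hsdiff : ∫ x in s \ t, f x ∂μ < ∫ x in t \ s, f x ∂μ :=
    (setIntegral_sdiff_le_setIntegral_const_sdiff hs ht hst hμs hfs hle).trans_lt <|
      setIntegral_lt_setIntegral_of_forall_lt (ht.diff hs) hμts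
        (integrableOn_const (measure_ne_top_of_subset sdiff_subset (hst ▸ hμs)))
        (hft.mono_set sdiff_subset) hgt
  linarith [setIntegral_sub_setIntegral_eq_sdiff hs ht hfs hft]

end SetIntegral

section Annulus

variable {E : Type*} [NormedAddCommGroup E] {c x : E} {r R : ℝ}

theorem lt_norm_and_le_norm_of_mem_sdiff_annulus
    (hx : x ∈ (ball c R \ closedBall 0 r) \ (ball 0 R \ closedBall 0 r)) : r < ‖x‖ ∧ R ≤ ‖x‖ := by
  simp only [mem_sdiff, mem_ball_zero_iff, mem_closedBall_zero_iff, not_le, not_and] at hx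
  exact ⟨hx.1.2, not_lt.1 fun h => by linarith [hx.2 h]⟩

theorem mem_ball_zero_sdiff_closedBall_zero_iff :
    x ∈ ball 0 R \ closedBall 0 r ↔ r < ‖x‖ ∧ ‖x‖ < R := by
  simp only [mem_sdiff, mem_ball_zero_iff, mem_closedBall_zero_iff, not_le, and_comm]

theorem setOf_lt_norm_and_norm_lt_eq :
    {x : E | r < ‖x‖ ∧ ‖x‖ < R} = ball 0 R \ closedBall 0 r :=
  Set.ext fun _ => mem_ball_zero_sdiff_closedBall_zero_iff.symm

theorem exists_mem_ball_lt_norm [NormedSpace ℝ E] (hc : c ≠ 0) (hR : 0 < R) :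
    ∃ x ∈ ball c R, R < ‖x‖ := by
  have hc0 : 0 < ‖c‖ := norm_pos_iff.2 hc
  set ρ := R - min R ‖c‖ / 2
  have hmin : 0 < min R ‖c‖ := lt_min hR hc0
  have hρ : 0 ≤ ρ := by have := min_le_left R ‖c‖; simp only [ρ]; linarith
  -- the point at distance `ρ` from `c` on the ray through `c`, with `R - ‖c‖ < ρ < R`
  refine ⟨(1 + ρ / ‖c‖) • c, ?_, ?_⟩
  · rw [mem_ball, dist_eq_norm, add_smul, one_smul, add_sub_cancel_left, norm_smul,
      Real.norm_of_nonneg (by positivity), div_mul_cancel₀ _ hc0.ne']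
    simp only [ρ]; linarith
  · rw [norm_smul, Real.norm_of_nonneg (by positivity), add_mul, one_mul,
      div_mul_cancel₀ _ hc0.ne']
    have := min_le_right R ‖c‖
    simp only [ρ]; linarith

variable [MeasurableSpace E] (μ : Measure E)

theorem measure_ball_sdiff_ball_pos [NormedSpace ℝ E] [OpensMeasurableSpace E]
    [μ.IsOpenPosMeasure] (hc : c ≠ 0) (hR : 0 < R) : 0 < μ (ball c R \ ball 0 R) := by
  obtain ⟨x, hxc, hx⟩ := exists_mem_ball_lt_norm hc hR
  refine ((isOpen_ball.sdiff isClosed_closedBall).measure_pos μ ⟨x, hxc, ?_⟩).trans_le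
    (measure_mono (sdiff_subset_sdiff_right ball_subset_closedBall))
  simpa using hx

theorem integrableOn_div_norm_pow [OpensMeasurableSpace E] (C : ℝ) (k : ℕ) {s : Set E}
    (hs : MeasurableSet s) (hμs : μ s ≠ ⊤) (hr : 0 < r) (hsr : ∀ x ∈ s, r ≤ ‖x‖) :
    IntegrableOn (fun x => C / ‖x‖ ^ k) s μ := by
  refine Measure.integrableOn_of_bounded (M := |C| / r ^ k) hμs
    (measurable_const.div (measurable_norm.pow_const k)).aestronglyMeasurable ?_
  filter_upwards [ae_restrict_mem hs] with x hx
  rw [norm_div, norm_pow, norm_norm, Real.norm_eq_abs]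
  exact div_le_div_of_nonneg_left (abs_nonneg C) (pow_pos hr k)
    (pow_le_pow_left₀ hr.le (hsr x hx) k)

theorem integrableOn_ball_sdiff_closedBall_div_norm_pow [OpensMeasurableSpace E] [ProperSpace E]
    [IsFiniteMeasureOnCompacts μ] (C : ℝ) (k : ℕ) (hr : 0 < r) :
    IntegrableOn (fun x => C / ‖x‖ ^ k) (ball c R \ closedBall 0 r) μ :=
  integrableOn_div_norm_pow μ C k (measurableSet_ball.diff measurableSet_closedBall)
    (measure_ne_top_of_subset sdiff_subset measure_ball_lt_top.ne) hr
    fun _ hx => (not_le.1 (mem_closedBall_zero_iff.not.1 hx.2)).le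

variable [NormedSpace ℝ E] [BorelSpace E] [FiniteDimensional ℝ E] [μ.IsAddHaarMeasure]

theorem addHaar_ball_sdiff_closedBall_center (hrR : r < R) (hsub : closedBall 0 r ⊆ ball c R) :
    μ (ball c R \ closedBall 0 r) = μ (ball 0 R \ closedBall 0 r) := by
  rw [measure_sdiff hsub measurableSet_closedBall.nullMeasurableSet measure_closedBall_lt_top.ne,
    measure_sdiff (closedBall_subset_ball hrR) measurableSet_closedBall.nullMeasurableSet
      measure_closedBall_lt_top.ne, Measure.addHaar_ball_center]

variable {g : ℝ → ℝ}

theorem setIntegral_ball_sdiff_closedBall_le (hg : AntitoneOn g (Ioi r)) (hrR : r < R)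
    (hsub : closedBall 0 r ⊆ ball c R)
    (hD : IntegrableOn (fun x => g ‖x‖) (ball c R \ closedBall 0 r) μ)
    (hΩ : IntegrableOn (fun x => g ‖x‖) (ball 0 R \ closedBall 0 r) μ) :
    ∫ x in ball c R \ closedBall 0 r, g ‖x‖ ∂μ ≤ ∫ x in ball 0 R \ closedBall 0 r, g ‖x‖ ∂μ := by
  refine setIntegral_le_setIntegral_of_measure_eq (measurableSet_ball.diff measurableSet_closedBall)
    (measurableSet_ball.diff measurableSet_closedBall)
    (addHaar_ball_sdiff_closedBall_center μ hrR hsub)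
    (measure_ne_top_of_subset sdiff_subset measure_ball_lt_top.ne) hD hΩ (m := g R) ?_ ?_
  · intro x hx
    obtain ⟨hrx, hRx⟩ := lt_norm_and_le_norm_of_mem_sdiff_annulus hx
    exact hg hrR hrx hRx
  · intro x hx
    obtain ⟨hrx, hxR⟩ := mem_ball_zero_sdiff_closedBall_zero_iff.1 hx.1
    exact hg hrx hrR hxR.le

theorem setIntegral_ball_sdiff_closedBall_lt (hg : StrictAntiOn g (Ioi r)) (hrR : r < R)
    (hR : 0 < R) (hc : c ≠ 0) (hsub : closedBall 0 r ⊆ ball c R)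
    (hD : IntegrableOn (fun x => g ‖x‖) (ball c R \ closedBall 0 r) μ)
    (hΩ : IntegrableOn (fun x => g ‖x‖) (ball 0 R \ closedBall 0 r) μ) :
    ∫ x in ball c R \ closedBall 0 r, g ‖x‖ ∂μ < ∫ x in ball 0 R \ closedBall 0 r, g ‖x‖ ∂μ := by
  have hμ := addHaar_ball_sdiff_closedBall_center μ hrR hsub
  have hμD : μ (ball c R \ closedBall 0 r) ≠ ⊤ :=
    measure_ne_top_of_subset sdiff_subset measure_ball_lt_top.ne
  have hDΩ : ball c R \ ball 0 R ⊆ (ball c R \ closedBall 0 r) \ (ball 0 R \ closedBall 0 r) :=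
    fun x hx => ⟨⟨hx.1, fun hxr => hx.2 (closedBall_subset_ball hrR hxr)⟩, fun hxΩ => hx.2 hxΩ.1⟩
  refine setIntegral_lt_setIntegral_of_measure_eq (measurableSet_ball.diff measurableSet_closedBall)
    (measurableSet_ball.diff measurableSet_closedBall) hμ hμD hD hΩ (m := g R) ?_ ?_ ?_
  · intro x hx
    obtain ⟨hrx, hRx⟩ := lt_norm_and_le_norm_of_mem_sdiff_annulus hx
    exact hg.antitoneOn hrR hrx hRx
  · intro x hx
    obtain ⟨hrx, hxR⟩ := mem_ball_zero_sdiff_closedBall_zero_iff.1 hx.1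
    exact hg hrx hrR hxR
  · rw [← measure_sdiff_symm (measurableSet_ball.diff measurableSet_closedBall).nullMeasurableSet
      (measurableSet_ball.diff measurableSet_closedBall).nullMeasurableSet hμ
      (measure_ne_top_of_subset inter_subset_left hμD)]
    exact ((measure_ball_sdiff_ball_pos μ hc hR).trans_le (measure_mono hDΩ)).ne'

end Annulus

theorem strictAntiOn_div_pow {C : ℝ} (hC : 0 < C) {k : ℕ} (hk : k ≠ 0) :
    StrictAntiOn (fun t : ℝ => C / t ^ k) (Ioi 0) := fun _ ha _ _ hab =>
  div_lt_div_of_pos_left hC (pow_pos ha k) (pow_lt_pow_left₀ hab (le_of_lt ha) hk)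

theorem stmt_7 (n : ℕ) (hn : 3 ≤ n) (R₁ R₂ : ℝ) (h1 : 0 < R₁) (h12 : R₁ < R₂)
    (c : EuclideanSpace ℝ (Fin n))
    (hsub : closure (Metric.ball (0 : EuclideanSpace ℝ (Fin n)) R₁) ⊆ Metric.ball c R₂) :
    (∫ x in Metric.ball c R₂ \ closure (Metric.ball (0 : EuclideanSpace ℝ (Fin n)) R₁),
        ((n:ℝ) - 2)^2 / ‖x‖ ^ (2*(n - 1))) ≤
      (∫ x in {x : EuclideanSpace ℝ (Fin n) | R₁ < ‖x‖ ∧ ‖x‖ < R₂},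
        ((n:ℝ) - 2)^2 / ‖x‖ ^ (2*(n - 1))) ∧
    ((∫ x in Metric.ball c R₂ \ closure (Metric.ball (0 : EuclideanSpace ℝ (Fin n)) R₁),
        ((n:ℝ) - 2)^2 / ‖x‖ ^ (2*(n - 1))) =
      (∫ x in {x : EuclideanSpace ℝ (Fin n) | R₁ < ‖x‖ ∧ ‖x‖ < R₂},
        ((n:ℝ) - 2)^2 / ‖x‖ ^ (2*(n - 1))) ↔
      Metric.ball c R₂ \ closure (Metric.ball (0 : EuclideanSpace ℝ (Fin n)) R₁) =
        {x : EuclideanSpace ℝ (Fin n) | R₁ < ‖x‖ ∧ ‖x‖ < R₂}) := by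
  rw [closure_ball _ h1.ne'] at hsub ⊢
  rw [setOf_lt_norm_and_norm_lt_eq]
  have hC : (0 : ℝ) < (n - 2) ^ 2 := by
    have : (3 : ℝ) ≤ n := by exact_mod_cast hn
    exact pow_pos (by linarith) 2
  have hg : StrictAntiOn (fun t : ℝ => ((n : ℝ) - 2) ^ 2 / t ^ (2 * (n - 1))) (Ioi R₁) :=
    (strictAntiOn_div_pow hC (by omega)).mono (Ioi_subset_Ioi h1.le)
  have hD := integrableOn_ball_sdiff_closedBall_div_norm_pow volume (c := c) (R := R₂)
    (((n : ℝ) - 2) ^ 2) (2 * (n - 1)) h1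
  have hΩ := integrableOn_ball_sdiff_closedBall_div_norm_pow volume (c := (0 : EuclideanSpace ℝ (Fin n))) (R := R₂)
    (((n : ℝ) - 2) ^ 2) (2 * (n - 1)) h1
  refine ⟨setIntegral_ball_sdiff_closedBall_le volume hg.antitoneOn h12 hsub hD hΩ,
    fun heq => ?_, fun hDΩ => by rw [hDΩ]⟩
  by_contra hne
  have hc : c ≠ 0 := by rintro rfl; exact hne rfl
  exact (setIntegral_ball_sdiff_closedBall_lt volume hg h12 (h1.trans h12) hc hsub hD hΩ).ne heq
end
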